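/- arXiv:1402.4632 — 10 statements merged into one kernel-verified Lean document; each statement's English description precedes it below -/
import Mathlib

section
/- The function f : [0,∞) → ℝ defined by f(x) = 1 − (erf(√x))² is completely monotone on [0,∞); that is, f is continuous on [0,∞), has derivatives of all orders on (0,∞), and (−1)^k f^{(k)}(x) ≥ 0 for every integer k ≥ 0 and every x > 0. -/
open Real MeasureTheory Set

/-- The error function `erf x = (2/√π) ∫₀^x e^{-y²} dy`. -/
noncomputable def erf (x : ℝ) : ℝ :=
  (2 / Real.sqrt Real.pi) * ∫ y in (0:ℝ)..x, Real.exp (-y ^ 2)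

namespace ErfCM


noncomputable def g (k : ℕ) (x t : ℝ) : ℝ :=
  (1 + t ^ 2) ^ k * Real.exp (-(x * (1 + t ^ 2))) / (1 + t ^ 2)

lemma g_nonneg (k : ℕ) (x t : ℝ) : 0 ≤ g k x t := by
  unfold g; positivity

lemma continuous_g (k : ℕ) (x : ℝ) : Continuous (g k x) := by
  unfold g
  exact (((continuous_const.add (continuous_pow 2)).pow k).mul
    ((continuous_const.mul (continuous_const.add (continuous_pow 2))).neg.rexp)).div
    (continuous_const.add (continuous_pow 2)) (fun t => by positivity)

lemma intInt_g (k : ℕ) (x : ℝ) : IntervalIntegrable (g k x) volume 0 1 :=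
  (continuous_g k x).intervalIntegrable 0 1

noncomputable def F (k : ℕ) (x : ℝ) : ℝ := ∫ t in (0:ℝ)..1, g k x t

lemma F_nonneg (k : ℕ) (x : ℝ) : 0 ≤ F k x :=
  intervalIntegral.integral_nonneg zero_le_one (fun t _ => g_nonneg k x t)

lemma hasDerivAt_g (k : ℕ) (t x : ℝ) :
    HasDerivAt (fun x => g k x t) (-g (k + 1) x t) x := by
  have h1 : (0:ℝ) < 1 + t ^ 2 := by positivity
  have : HasDerivAt (fun x : ℝ => -(x * (1 + t ^ 2))) (-(1 + t^2)) x := by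
    have h0 := ((hasDerivAt_id x).mul_const (1 + t ^ 2)).neg
    exact h0.congr_deriv (by ring)
  have h := ((this.exp).const_mul ((1 + t ^ 2) ^ k)).div_const (1 + t ^ 2)
  refine h.congr_deriv ?_
  unfold g
  field_simp [pow_succ]
  ring

lemma hasDerivAt_F (k : ℕ) (x₀ : ℝ) : HasDerivAt (F k) (-F (k + 1) x₀) x₀ := by
  have key := intervalIntegral.hasDerivAt_integral_of_dominated_loc_of_deriv_le
    (F := fun x t => g k x t) (F' := fun x t => -g (k+1) x t) (x₀ := x₀)
    (a := 0) (b := 1) (μ := volume)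
    (bound := fun _ => 2 ^ (k+1) * Real.exp (2 * (|x₀| + 1)))
    (Metric.ball_mem_nhds _ one_pos)
    (Filter.Eventually.of_forall fun x => (continuous_g k x).aestronglyMeasurable)
    (intInt_g k x₀)
    ((continuous_g (k+1) x₀).neg.aestronglyMeasurable)
    ?_
    (intervalIntegrable_const)
    (Filter.Eventually.of_forall fun t _ x _ => hasDerivAt_g k t x)
  · have := key.2
    rwa [intervalIntegral.integral_neg] at this
  · refine Filter.Eventually.of_forall fun t ht x hx => ?_
    have ht' : t ∈ Set.Ioc (0:ℝ) 1 := by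
      simpa [Set.uIoc_of_le (zero_le_one)] using ht
    have h1 : (0:ℝ) < 1 + t ^ 2 := by positivity
    have ht2 : t ^ 2 ≤ 1 := by nlinarith [ht'.1, ht'.2]
    have hb : 1 + t ^ 2 ≤ 2 := by linarith
    have hxb : |x - x₀| < 1 := by simpa [Real.dist_eq] using hx
    have hxabs : |x| ≤ |x₀| + 1 := by
      have := abs_sub_abs_le_abs_sub x x₀
      linarith
    rw [norm_neg, Real.norm_eq_abs, abs_of_nonneg (g_nonneg _ _ _)]
    unfold g
    rw [div_le_iff₀ h1]
    have e1 : Real.exp (-(x * (1 + t ^ 2))) ≤ Real.exp (2 * (|x₀| + 1)) := by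
      apply Real.exp_le_exp.2
      nlinarith [mul_nonneg (by linarith [neg_le_abs x] : (0:ℝ) ≤ |x| + x) h1.le,
        mul_le_mul hxabs hb h1.le (by positivity : (0:ℝ) ≤ |x₀| + 1), abs_nonneg x]
    have e2 : (1 + t ^ 2) ^ (k+1) ≤ 2 ^ (k+1) := pow_le_pow_left₀ h1.le hb _
    calc (1 + t ^ 2) ^ (k+1) * Real.exp (-(x * (1 + t ^ 2)))
        ≤ 2 ^ (k+1) * Real.exp (2 * (|x₀| + 1)) :=
          mul_le_mul e2 e1 (Real.exp_pos _).le (by positivity)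
      _ ≤ 2 ^ (k + 1) * Real.exp (2 * (|x₀| + 1)) * (1 + t ^ 2) := by
          nlinarith [mul_nonneg (by positivity : (0:ℝ) ≤ 2 ^ (k+1) * Real.exp (2 * (|x₀| + 1))) (sq_nonneg t)]

/-! ### Complex extension, for analyticity -/

noncomputable def G (z : ℂ) : ℂ :=
  ∫ t in (0:ℝ)..1, Complex.exp (-(z * (1 + (t:ℂ) ^ 2))) / (1 + (t:ℂ) ^ 2)

lemma one_add_sq_ne (t : ℝ) : (1 + (t:ℂ) ^ 2) ≠ 0 := by
  have h : (1 + (t:ℂ) ^ 2) = (((1 + t ^ 2 : ℝ)) : ℂ) := by push_cast; ring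
  rw [h]
  exact_mod_cast (by positivity : (1 + t ^ 2 : ℝ) ≠ 0)

lemma continuous_Gt (z : ℂ) :
    Continuous (fun t : ℝ => Complex.exp (-(z * (1 + (t:ℂ) ^ 2))) / (1 + (t:ℂ) ^ 2)) := by
  apply Continuous.div
  · exact Complex.continuous_exp.comp
      ((continuous_const.mul (continuous_const.add ((Complex.continuous_ofReal.pow 2)))).neg)
  · exact continuous_const.add (Complex.continuous_ofReal.pow 2)
  · exact fun t => one_add_sq_ne t

lemma hasDerivAt_G (z₀ : ℂ) :
    HasDerivAt G (∫ t in (0:ℝ)..1, -Complex.exp (-(z₀ * (1 + (t:ℂ) ^ 2)))) z₀ := by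
  have key := intervalIntegral.hasDerivAt_integral_of_dominated_loc_of_deriv_le
    (F := fun (z : ℂ) (t : ℝ) => Complex.exp (-(z * (1 + (t:ℂ) ^ 2))) / (1 + (t:ℂ) ^ 2))
    (F' := fun (z : ℂ) (t : ℝ) => -Complex.exp (-(z * (1 + (t:ℂ) ^ 2)))) (x₀ := z₀)
    (a := 0) (b := 1) (μ := volume)
    (bound := fun _ => Real.exp (2 * (‖z₀‖ + 1)))
    (Metric.ball_mem_nhds _ one_pos)
    (Filter.Eventually.of_forall fun z => (continuous_Gt z).aestronglyMeasurable)
    ((continuous_Gt z₀).intervalIntegrable 0 1)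
    ((by fun_prop : Continuous fun t : ℝ => -Complex.exp (-(z₀ * (1 + (t:ℂ) ^ 2)))).aestronglyMeasurable)
    ?_
    (intervalIntegrable_const)
    ?_
  · exact key.2
  · refine Filter.Eventually.of_forall fun t ht z hz => ?_
    have ht' : t ∈ Set.Ioc (0:ℝ) 1 := by
      simpa [Set.uIoc_of_le (zero_le_one)] using ht
    have ht2 : t ^ 2 ≤ 1 := by nlinarith [ht'.1, ht'.2]
    rw [norm_neg, Complex.norm_exp]
    apply Real.exp_le_exp.2
    have hre : (-(z * (1 + (t:ℂ) ^ 2))).re = -(z.re * (1 + t ^ 2)) := by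
      simp [Complex.mul_re, ← Complex.ofReal_pow]
    rw [hre]
    have hz' : ‖z - z₀‖ < 1 := by
      simpa [Complex.dist_eq] using hz
    have hzre : |z.re| ≤ ‖z₀‖ + 1 := by
      have h1 : |z.re| ≤ ‖z‖ := Complex.abs_re_le_norm z
      have h2 : ‖z‖ ≤ ‖z₀‖ + ‖z - z₀‖ := by
        simpa using norm_add_le z₀ (z - z₀)
      linarith
    have h1 : (0:ℝ) < 1 + t ^ 2 := by positivity
    nlinarith [mul_nonneg (by linarith [neg_le_abs z.re] : (0:ℝ) ≤ |z.re| + z.re) h1.le,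
      mul_le_mul hzre (by linarith : 1 + t ^ 2 ≤ 2) h1.le
        (by positivity : (0:ℝ) ≤ ‖z₀‖ + 1)]
  · refine Filter.Eventually.of_forall fun t ht z hz => ?_
    have hd : HasDerivAt (fun z : ℂ => -(z * (1 + (t:ℂ) ^ 2))) (-(1 + (t:ℂ) ^ 2)) z := by
      have h0 := ((hasDerivAt_id z).mul_const (1 + (t:ℂ) ^ 2)).neg
      exact h0.congr_deriv (by ring)
    have h := (hd.cexp).div_const (1 + (t:ℂ) ^ 2)
    refine h.congr_deriv ?_
    symm
    rw [eq_div_iff (one_add_sq_ne t)]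
    ring

lemma G_ofReal (x : ℝ) : G x = ((F 0 x : ℝ) : ℂ) := by
  unfold G F
  rw [← intervalIntegral.integral_ofReal]
  apply intervalIntegral.integral_congr
  intro t _
  simp only [g, pow_zero, one_mul, Complex.ofReal_div, Complex.ofReal_exp]
  push_cast
  ring_nf

lemma analytic_F0 : AnalyticOnNhd ℝ (F 0) Set.univ := by
  have hG : Differentiable ℂ G := fun z => (hasDerivAt_G z).differentiableAt
  have hGa : AnalyticOnNhd ℂ G Set.univ :=
    hG.differentiableOn.analyticOnNhd isOpen_univ
  have hGr : AnalyticOnNhd ℝ G Set.univ := hGa.restrictScalars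
  have hre : AnalyticOnNhd ℝ (Complex.reCLM : ℂ → ℝ) Set.univ :=
    fun z _ => Complex.reCLM.analyticAt z
  have hofReal : AnalyticOnNhd ℝ (Complex.ofRealCLM : ℝ → ℂ) Set.univ :=
    fun x _ => Complex.ofRealCLM.analyticAt x
  have hcomp : AnalyticOnNhd ℝ (fun x : ℝ => Complex.reCLM (G (Complex.ofRealCLM x))) Set.univ := by
    apply (hre.comp (hGr.comp hofReal ?_) ?_) <;> intro x _ <;> exact Set.mem_univ _
  have : (fun x : ℝ => Complex.reCLM (G (Complex.ofRealCLM x))) = F 0 := by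
    funext x
    simp [G_ofReal x]
  rwa [this] at hcomp


lemma gdef (k : ℕ) (x t : ℝ) :
    g k x t = (1 + t ^ 2) ^ k * Real.exp (-(x * (1 + t ^ 2))) / (1 + t ^ 2) := rfl

lemma Fdef (k : ℕ) (x : ℝ) : F k x = ∫ t in (0:ℝ)..1, g k x t := rfl


lemma hasDerivAt_erf (x : ℝ) :
    HasDerivAt erf (2 / Real.sqrt Real.pi * Real.exp (-x ^ 2)) x := by
  have hc : Continuous fun y : ℝ => Real.exp (-y ^ 2) := by continuity
  exact ((hc.integral_hasStrictDerivAt 0 x).hasDerivAt).const_mul (2 / Real.sqrt Real.pi)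

lemma continuous_erf : Continuous erf :=
  Differentiable.continuous (fun x => (hasDerivAt_erf x).differentiableAt)

lemma erf_zero : erf 0 = 0 := by simp [erf]

lemma F_one_eq {x : ℝ} (hx : 0 < x) :
    F 1 x = Real.exp (-x) * ((Real.sqrt x)⁻¹ * (Real.sqrt π / 2 * erf (Real.sqrt x))) := by
  have hsx : (0:ℝ) < Real.sqrt x := Real.sqrt_pos.2 hx
  have h1 : F 1 x = ∫ t in (0:ℝ)..1, Real.exp (-x) * Real.exp (-(Real.sqrt x * t) ^ 2) := by
    rw [Fdef]
    apply intervalIntegral.integral_congr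
    intro t _
    rw [gdef, pow_one]
    have h2 : (1 + t ^ 2 : ℝ) ≠ 0 := by positivity
    rw [mul_div_assoc] at *
    rw [show ((1 + t ^ 2 : ℝ)) * (Real.exp (-(x * (1 + t ^ 2))) / (1 + t ^ 2))
        = Real.exp (-(x * (1 + t ^ 2))) by field_simp]
    show Real.exp (-(x * (1 + t ^ 2))) = Real.exp (-x) * Real.exp (-(Real.sqrt x * t) ^ 2)
    rw [← Real.exp_add]
    congr 1
    rw [mul_pow, Real.sq_sqrt hx.le]
    ring
  rw [h1, intervalIntegral.integral_const_mul]
  congr 1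
  have hcomp := intervalIntegral.integral_comp_mul_left
    (fun y : ℝ => Real.exp (-y ^ 2)) (c := Real.sqrt x) (a := 0) (b := 1) (ne_of_gt hsx)
  rw [mul_zero, mul_one] at hcomp
  rw [hcomp, smul_eq_mul]
  congr 1
  rw [erf]
  field_simp

lemma hasDerivAt_target {x : ℝ} (hx : 0 < x) :
    HasDerivAt (fun x : ℝ => 1 - erf (Real.sqrt x) ^ 2) (-(4 / π * F 1 x)) x := by
  have hsx : (0:ℝ) < Real.sqrt x := Real.sqrt_pos.2 hx
  have h1 : HasDerivAt Real.sqrt (1 / (2 * Real.sqrt x)) x := Real.hasDerivAt_sqrt (ne_of_gt hx)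
  have h2 : HasDerivAt (fun y => erf (Real.sqrt y))
      (2 / Real.sqrt π * Real.exp (-Real.sqrt x ^ 2) * (1 / (2 * Real.sqrt x))) x :=
    (hasDerivAt_erf (Real.sqrt x)).comp x h1
  have h3 := (h2.pow 2).const_sub 1
  refine h3.congr_deriv ?_
  symm
  rw [F_one_eq hx, Real.sq_sqrt hx.le]
  have hπ : Real.sqrt π * Real.sqrt π = π := Real.mul_self_sqrt pi_pos.le
  rw [show (π:ℝ) = Real.sqrt π * Real.sqrt π from hπ.symm]
  rw [Real.sqrt_mul_self (Real.sqrt_nonneg π)]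
  field_simp
  ring

lemma F_zero_zero : F 0 0 = π / 4 := by
  have h : F 0 0 = ∫ t in (0:ℝ)..1, 1 / (1 + t ^ 2) := by
    rw [Fdef]
    apply intervalIntegral.integral_congr
    intro t _
    rw [gdef]
    norm_num
  rw [h, integral_one_div_one_add_sq]
  simp [Real.arctan_one]

lemma key_eq {x : ℝ} (hx : 0 ≤ x) : 1 - erf (Real.sqrt x) ^ 2 = 4 / π * F 0 x := by
  have hcontF : Continuous (F 0) :=
    Differentiable.continuous (fun x => (hasDerivAt_F 0 x).differentiableAt)
  set d : ℝ → ℝ := fun x => 4 / π * F 0 x - (1 - erf (Real.sqrt x) ^ 2) with hd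
  have hcont : Continuous d := by
    apply Continuous.sub
    · exact continuous_const.mul hcontF
    · exact continuous_const.sub ((continuous_erf.comp Real.continuous_sqrt).pow 2)
  have hderiv : ∀ y : ℝ, 0 < y → HasDerivAt d 0 y := by
    intro y hy
    have h1 := (hasDerivAt_F 0 y).const_mul (4 / π)
    have h2 := hasDerivAt_target hy
    have h3 := h1.sub h2
    exact h3.congr_deriv (by ring)
  have hzero : d 0 = 0 := by
    simp only [hd, F_zero_zero, Real.sqrt_zero, erf_zero]
    field_simp
    norm_num
  suffices hdx : d x = 0 by
    simp only [hd] at hdx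
    linarith
  rcases eq_or_lt_of_le hx with rfl | hx'
  · exact hzero
  · -- d x = d a for all a ∈ Ioc 0 x
    have hconst : ∀ a ∈ Set.Ioc (0:ℝ) x, d x = d a := by
      intro a ha
      have := constant_of_has_deriv_right_zero (f := d) (a := a) (b := x)
        hcont.continuousOn
        (fun y hy => (hderiv y (lt_of_lt_of_le ha.1 hy.1)).hasDerivWithinAt)
      exact this x ⟨ha.2, le_refl x⟩
    have h1 : Filter.Tendsto d (nhdsWithin 0 (Set.Ioi 0)) (nhds (d 0)) :=
      (hcont.tendsto 0).mono_left nhdsWithin_le_nhds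
    have hev : ∀ᶠ a in nhdsWithin 0 (Set.Ioi 0), d a = d x := by
      filter_upwards [Ioc_mem_nhdsGT hx'] with a ha
      exact (hconst a ha).symm
    have h2 : Filter.Tendsto d (nhdsWithin 0 (Set.Ioi 0)) (nhds (d x)) :=
      Filter.Tendsto.congr' (by filter_upwards [hev] with a ha; exact ha.symm)
        tendsto_const_nhds
    have := tendsto_nhds_unique h1 h2
    rw [← this, hzero]

lemma iterated (k : ℕ) : ∀ x ∈ Set.Ioi (0:ℝ),
    iteratedDerivWithin k (fun x : ℝ => 1 - erf (Real.sqrt x) ^ 2) (Set.Ioi 0) x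
      = (-1 : ℝ) ^ k * (4 / π * F k x) := by
  induction k with
  | zero =>
    intro x hx
    simpa [iteratedDerivWithin_zero] using key_eq (le_of_lt hx)
  | succ k ih =>
    intro x hx
    rw [iteratedDerivWithin_succ,
      derivWithin_congr (fun y hy => ih y hy) (ih x hx),
      derivWithin_of_isOpen isOpen_Ioi hx]
    have hD : HasDerivAt (fun x => (-1:ℝ) ^ k * (4 / π * F k x))
        ((-1:ℝ) ^ k * (4 / π * -F (k + 1) x)) x :=
      ((hasDerivAt_F k x).const_mul (4 / π)).const_mul ((-1:ℝ) ^ k)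
    rw [hD.deriv]
    ring

end ErfCM

open ErfCM in
/-- The function `f(x) = 1 - (erf √x)²` is completely monotone on `[0,∞)`:
it is continuous on `[0,∞)`, has derivatives of all orders on `(0,∞)`, and
`(-1)^k f⁽ᵏ⁾(x) ≥ 0` for every `k ≥ 0` and `x > 0`. -/
theorem erf_sq_completely_monotone :
    ContinuousOn (fun x : ℝ => 1 - (erf (Real.sqrt x)) ^ 2) (Set.Ici 0) ∧
    ContDiffOn ℝ (⊤ : ℕ∞) (fun x : ℝ => 1 - (erf (Real.sqrt x)) ^ 2) (Set.Ioi 0) ∧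
    ∀ (k : ℕ) (x : ℝ), 0 < x →
      0 ≤ (-1 : ℝ) ^ k *
        iteratedDerivWithin k (fun x : ℝ => 1 - (erf (Real.sqrt x)) ^ 2) (Set.Ioi 0) x := by
  refine ⟨?_, ?_, ?_⟩
  · exact (continuous_const.sub ((continuous_erf.comp Real.continuous_sqrt).pow 2)).continuousOn
  · refine ContDiffOn.of_le ?_ (le_top : ((⊤ : ℕ∞) : WithTop ℕ∞) ≤ ⊤)
    rw [contDiffOn_omega_iff_analyticOn (uniqueDiffOn_Ioi 0)]
    have h1 : AnalyticOnNhd ℝ (fun x : ℝ => 4 / π * F 0 x) (Set.Ioi 0) :=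
      analyticOnNhd_const.mul (analytic_F0.mono (Set.subset_univ _))
    have h2 : AnalyticOnNhd ℝ (fun x : ℝ => 1 - erf (Real.sqrt x) ^ 2) (Set.Ioi 0) :=
      h1.congr isOpen_Ioi (fun x hx => (key_eq (le_of_lt hx)).symm)
    exact h2.analyticOn
  · intro k x hx
    rw [iterated k x hx]
    have h : (-1:ℝ) ^ k * ((-1:ℝ) ^ k * (4 / π * F k x)) = ((-1:ℝ) ^ k) ^ 2 * (4 / π * F k x) := by
      ring
    rw [h]
    exact mul_nonneg (sq_nonneg _) (mul_nonneg (by positivity) (F_nonneg k x))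
end

section
/- For α ∈ [1/2, 1], the function R_α : [−1,1] → ℝ defined by R_α(x) = cos(π √((1−α)(1−x)/2)) is absolutely monotone on [0,1]; that is, R_α is continuous on [0,1], has derivatives of all orders on (0,1), and R_α^{(k)}(x) ≥ 0 for every integer k ≥ 0 and every x ∈ (0,1). -/
open Real Set
open scoped Nat

noncomputable def auxCoef (c : ℝ) (k m : ℕ) : ℝ :=
  c ^ (m + k) * (m + k)! / ((m)! * (2 * (m + k))!)

noncomputable def auxG (c : ℝ) (k : ℕ) (x : ℝ) : ℝ := ∑' m, auxCoef c k m * (x - 1) ^ m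

lemma auxCoef_nonneg {c : ℝ} (hc : 0 ≤ c) (k m : ℕ) : 0 ≤ auxCoef c k m := by
  unfold auxCoef; positivity

lemma auxCoef_le {c : ℝ} (hc : 0 ≤ c) (k m : ℕ) : auxCoef c k m ≤ c ^ (m + k) / (m)! := by
  unfold auxCoef
  have h1 : ((m + k)! : ℝ) ≤ ((2 * (m + k))! : ℝ) := by
    exact_mod_cast Nat.factorial_le (by omega)
  have hm : (0:ℝ) < (m)! := by exact_mod_cast Nat.factorial_pos m
  have h2 : (0:ℝ) < ((2 * (m + k))! : ℝ) := by exact_mod_cast (Nat.factorial_pos _)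
  rw [div_le_div_iff₀ (by positivity) hm]
  calc c ^ (m + k) * ((m + k)! : ℝ) * (m)!
      ≤ c ^ (m + k) * ((2 * (m + k))! : ℝ) * (m)! := by gcongr
    _ = c ^ (m + k) * ((m)! * ((2 * (m + k))! : ℝ)) := by ring

lemma aux_rec (c : ℝ) (k m : ℕ) :
    auxCoef c (k + 1) m = ((m : ℝ) + 1) * auxCoef c k (m + 1) := by
  unfold auxCoef
  have h1 : m + (k + 1) = (m + 1) + k := by omega
  rw [h1, Nat.factorial_succ m]
  push_cast
  have hm : (0:ℝ) < (m)! := by exact_mod_cast Nat.factorial_pos m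
  have h2 : (0:ℝ) < ((2 * (m + 1 + k))! : ℝ) := by exact_mod_cast (Nat.factorial_pos _)
  field_simp

lemma aux_succ (c : ℝ) (k m : ℕ) :
    auxCoef c k (m + 1) * (((m:ℝ) + 1) * (2 * ((m:ℝ) + (k:ℝ)) + 1) * 2) = c * auxCoef c k m := by
  unfold auxCoef
  have h1 : (m + 1) + k = (m + k) + 1 := by omega
  rw [h1, Nat.factorial_succ (m + k), Nat.factorial_succ m]
  have h2 : 2 * ((m + k) + 1) = (2 * (m + k) + 1) + 1 := by omega
  rw [h2, Nat.factorial_succ (2 * (m + k) + 1), Nat.factorial_succ (2 * (m + k))]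
  push_cast
  have hm : (0:ℝ) < (m)! := by exact_mod_cast Nat.factorial_pos m
  have h3 : (0:ℝ) < ((2 * (m + k))! : ℝ) := by exact_mod_cast (Nat.factorial_pos _)
  field_simp
  ring

lemma aux_anti {c : ℝ} (hc0 : 0 ≤ c) (hc6 : c ≤ 6) {k : ℕ} (hk : k ≠ 0) (m : ℕ) :
    auxCoef c k (m + 1) ≤ auxCoef c k m := by
  have hid := aux_succ c k m
  have hk1 : (1:ℝ) ≤ (k:ℝ) := by exact_mod_cast Nat.one_le_iff_ne_zero.mpr hk
  have hm0 : (0:ℝ) ≤ (m:ℝ) := Nat.cast_nonneg m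
  have hD : (6:ℝ) ≤ ((m:ℝ) + 1) * (2 * ((m:ℝ) + (k:ℝ)) + 1) * 2 := by nlinarith
  have h0 := auxCoef_nonneg hc0 k m
  have h1 := auxCoef_nonneg hc0 k (m + 1)
  nlinarith

lemma aux_summable {c : ℝ} (hc : 0 ≤ c) (k : ℕ) (t : ℝ) :
    Summable (fun m => auxCoef c k m * t ^ m) := by
  apply Summable.of_norm
  apply Summable.of_nonneg_of_le (f := fun m => c ^ k * ((c * |t|) ^ m / (m)!))
    (fun m => norm_nonneg _)
  · intro m
    rw [Real.norm_eq_abs, abs_mul, abs_of_nonneg (auxCoef_nonneg hc k m), abs_pow]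
    calc auxCoef c k m * |t| ^ m ≤ (c ^ (m + k) / (m)!) * |t| ^ m :=
          mul_le_mul_of_nonneg_right (auxCoef_le hc k m) (pow_nonneg (abs_nonneg t) m)
      _ = c ^ k * ((c * |t|) ^ m / (m)!) := by
          rw [pow_add, mul_pow]; ring
  · exact (Real.summable_pow_div_factorial (c * |t|)).mul_left _

noncomputable def auxP (c : ℝ) (k : ℕ) : FormalMultilinearSeries ℝ ℝ ℝ :=
  FormalMultilinearSeries.ofScalars ℝ (fun m => auxCoef c k m)

lemma auxP_radius {c : ℝ} (hc : 0 ≤ c) (k : ℕ) : (auxP c k).radius = ⊤ := by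
  apply FormalMultilinearSeries.radius_eq_top_of_summable_norm
  intro r
  have : ∀ m : ℕ, ‖auxP c k m‖ * (r:ℝ) ^ m = auxCoef c k m * (r:ℝ) ^ m := by
    intro m
    rw [auxP, FormalMultilinearSeries.ofScalars_norm, Real.norm_eq_abs,
      abs_of_nonneg (auxCoef_nonneg hc k m)]
  exact (aux_summable hc k r).congr fun m => (this m).symm

lemma auxG_hasFPS {c : ℝ} (hc : 0 ≤ c) (k : ℕ) :
    HasFPowerSeriesOnBall (auxG c k) (auxP c k) 1 ⊤ := by
  refine ⟨by rw [auxP_radius hc], ENNReal.zero_lt_top, ?_⟩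
  intro y _
  have h : (fun n : ℕ => auxP c k n fun _ => y) = fun n => auxCoef c k n * y ^ n := by
    funext n
    rw [auxP, FormalMultilinearSeries.ofScalars_apply_eq, smul_eq_mul]
  rw [h]
  have h2 : auxG c k (1 + y) = ∑' m, auxCoef c k m * y ^ m := by
    simp [auxG, add_sub_cancel_left]
  rw [h2]
  exact (aux_summable hc k y).hasSum

lemma auxG_hasDerivAt {c : ℝ} (hc : 0 ≤ c) (k : ℕ) (x : ℝ) :
    HasDerivAt (auxG c k) (auxG c (k + 1) x) x := by
  set R : ℝ := |x - 1| + 1 with hR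
  have hR0 : 0 < R := by positivity
  have hu_sum : Summable (fun m : ℕ => auxCoef c k m * ((m : ℝ) * R ^ (m - 1))) := by
    apply (summable_nat_add_iff 1).mp
    refine (aux_summable hc (k + 1) R).congr fun m => ?_
    simp only [Nat.add_sub_cancel]
    rw [aux_rec c k m]
    push_cast
    ring
  have hder : ∀ (m : ℕ) (y : ℝ), y ∈ Ioo (1 - R) (1 + R) →
      HasDerivAt (fun z : ℝ => auxCoef c k m * (z - 1) ^ m)
        (auxCoef c k m * ((m:ℝ) * (y - 1) ^ (m - 1))) y := by
    intro m y _
    have h1 : HasDerivAt (fun z : ℝ => (z - 1) ^ m) ((m : ℝ) * (y - 1) ^ (m - 1)) y := by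
      simpa using ((hasDerivAt_id y).sub_const 1).fun_pow m
    exact h1.const_mul _
  have hbound : ∀ (m : ℕ) (y : ℝ), y ∈ Ioo (1 - R) (1 + R) →
      ‖auxCoef c k m * ((m:ℝ) * (y - 1) ^ (m - 1))‖
        ≤ auxCoef c k m * ((m : ℝ) * R ^ (m - 1)) := by
    intro m y hy
    have hy' : |y - 1| ≤ R := by
      rw [abs_le]
      constructor
      · linarith [hy.1]
      · linarith [hy.2]
    rw [Real.norm_eq_abs, abs_mul, abs_of_nonneg (auxCoef_nonneg hc k m), abs_mul,
      Nat.abs_cast, abs_pow]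
    exact mul_le_mul_of_nonneg_left (mul_le_mul_of_nonneg_left
      (pow_le_pow_left₀ (abs_nonneg _) hy' _) (Nat.cast_nonneg m)) (auxCoef_nonneg hc k m)
  have hx : x ∈ Ioo (1 - R) (1 + R) := by
    have h : |x - 1| < R := by rw [hR]; exact lt_add_one _
    rw [abs_lt] at h
    constructor
    · linarith [h.1]
    · linarith [h.2]
  have h1mem : (1:ℝ) ∈ Ioo (1 - R) (1 + R) := by
    constructor
    · linarith
    · linarith
  have hg0 : Summable fun m : ℕ => auxCoef c k m * ((1:ℝ) - 1) ^ m := by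
    simpa using aux_summable hc k ((1:ℝ) - 1)
  have hmain := hasDerivAt_tsum_of_isPreconnected hu_sum isOpen_Ioo
    isPreconnected_Ioo hder hbound h1mem hg0 hx
  have hsum_eq : (∑' n : ℕ, auxCoef c k n * ((n:ℝ) * (x - 1) ^ (n - 1))) = auxG c (k + 1) x := by
    have hs : Summable (fun n : ℕ => auxCoef c k n * ((n:ℝ) * (x - 1) ^ (n - 1))) := by
      apply (summable_nat_add_iff 1).mp
      refine (aux_summable hc (k + 1) (x - 1)).congr fun m => ?_
      simp only [Nat.add_sub_cancel]
      rw [aux_rec c k m]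
      push_cast
      ring
    rw [Summable.tsum_eq_zero_add hs]
    simp only [Nat.cast_zero, zero_mul, mul_zero, zero_add, Nat.add_sub_cancel]
    rw [auxG]
    apply tsum_congr
    intro n
    rw [aux_rec c k n]
    push_cast
    ring
  rw [hsum_eq] at hmain
  exact hmain

lemma auxG_iteratedDeriv {c : ℝ} (hc : 0 ≤ c) (k : ℕ) :
    iteratedDeriv k (auxG c 0) = auxG c k := by
  induction k with
  | zero => simp [iteratedDeriv_zero]
  | succ k ih =>
    rw [iteratedDeriv_succ, ih]
    funext x
    exact (auxG_hasDerivAt hc k x).deriv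

lemma auxG_nonneg {c : ℝ} (hc0 : 0 ≤ c) (hc6 : c ≤ 6) {k : ℕ} (hk : k ≠ 0) {x : ℝ}
    (hx0 : 0 ≤ x) (hx1 : x ≤ 1) : 0 ≤ auxG c k x := by
  have ht0 : x - 1 ≤ 0 := by linarith
  have ht1 : -1 ≤ x - 1 := by linarith
  have hsum : Summable (fun m => auxCoef c k m * (x - 1) ^ m) := aux_summable hc0 k (x - 1)
  have he : Summable fun j : ℕ => auxCoef c k (2 * j) * (x - 1) ^ (2 * j) :=
    by simpa [Function.comp_def] using
      hsum.comp_injective (i := fun j : ℕ => 2 * j) (fun a b h => by simp only at h; omega)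
  have ho : Summable fun j : ℕ => auxCoef c k (2 * j + 1) * (x - 1) ^ (2 * j + 1) :=
    by simpa [Function.comp_def] using
      hsum.comp_injective (i := fun j : ℕ => 2 * j + 1) (fun a b h => by simp only at h; omega)
  have key : ∀ j : ℕ, 0 ≤ auxCoef c k (2 * j) * (x - 1) ^ (2 * j)
      + auxCoef c k (2 * j + 1) * (x - 1) ^ (2 * j + 1) := by
    intro j
    have h1 : (0:ℝ) ≤ (x - 1) ^ (2 * j) := Even.pow_nonneg (even_two_mul j) (x - 1)
    have h2 : auxCoef c k (2 * j + 1) ≤ auxCoef c k (2 * j) := aux_anti hc0 hc6 hk (2 * j)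
    have h3 : 0 ≤ auxCoef c k (2 * j + 1) := auxCoef_nonneg hc0 k _
    have h4 : (x - 1) ^ (2 * j + 1) = (x - 1) ^ (2 * j) * (x - 1) := pow_succ (x - 1) (2 * j)
    nlinarith [mul_nonneg h1 (sub_nonneg.mpr h2), mul_nonneg h1 h3]
  calc (0:ℝ) ≤ ∑' j, (auxCoef c k (2 * j) * (x - 1) ^ (2 * j)
      + auxCoef c k (2 * j + 1) * (x - 1) ^ (2 * j + 1)) := tsum_nonneg key
    _ = (∑' j, auxCoef c k (2 * j) * (x - 1) ^ (2 * j))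
      + ∑' j, auxCoef c k (2 * j + 1) * (x - 1) ^ (2 * j + 1) := Summable.tsum_add he ho
    _ = ∑' m, auxCoef c k m * (x - 1) ^ m :=
      tsum_even_add_odd (f := fun m => auxCoef c k m * (x - 1) ^ m) he ho
    _ = auxG c k x := rfl

lemma iteratedDerivWithin_of_isOpen'' {f : ℝ → ℝ} {s : Set ℝ} (hs : IsOpen s) {x : ℝ}
    (hx : x ∈ s) (n : ℕ) : iteratedDerivWithin n f s x = iteratedDeriv n f x := by
  simp only [iteratedDerivWithin, iteratedDeriv, iteratedFDerivWithin_of_isOpen n hs hx]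

/-- For `α ∈ [1/2, 1]`, the function `R_α(x) = cos(π √((1-α)(1-x)/2))` is absolutely
monotone on `[0,1]`: it is continuous on `[0,1]`, has derivatives of all orders on
`(0,1)`, and all these derivatives are nonnegative on `(0,1)`. -/
theorem R_alpha_absolutely_monotone (α : ℝ) (hα : α ∈ Set.Icc (1/2 : ℝ) 1) :
    ContinuousOn (fun x : ℝ => Real.cos (Real.pi * Real.sqrt ((1 - α) * (1 - x) / 2)))
      (Set.Icc 0 1) ∧
    ContDiffOn ℝ (⊤ : ℕ∞) (fun x : ℝ => Real.cos (Real.pi * Real.sqrt ((1 - α) * (1 - x) / 2)))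
      (Set.Ioo 0 1) ∧
    ∀ (k : ℕ), ∀ x ∈ Set.Ioo (0:ℝ) 1,
      0 ≤ iteratedDerivWithin k
        (fun x : ℝ => Real.cos (Real.pi * Real.sqrt ((1 - α) * (1 - x) / 2)))
        (Set.Ioo 0 1) x := by
  obtain ⟨hα1, hα2⟩ := hα
  set c : ℝ := π ^ 2 * ((1 - α) / 2) with hc
  have hc0 : 0 ≤ c := by
    have h1 : 0 ≤ 1 - α := by linarith
    rw [hc]; positivity
  have hc6 : c ≤ 6 := by
    rw [hc]
    nlinarith [Real.pi_le_four, Real.pi_pos]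
  have hEq : ∀ x : ℝ, x ≤ 1 →
      auxG c 0 x = Real.cos (Real.pi * Real.sqrt ((1 - α) * (1 - x) / 2)) := by
    intro x hx
    have hs0 : 0 ≤ (1 - α) * (1 - x) / 2 := by
      have h1 : 0 ≤ 1 - α := by linarith
      have h2 : 0 ≤ 1 - x := by linarith
      positivity
    rw [Real.cos_eq_tsum]
    unfold auxG
    apply tsum_congr
    intro n
    have h1 : (π * Real.sqrt ((1 - α) * (1 - x) / 2)) ^ (2 * n)
        = π ^ (2 * n) * ((1 - α) * (1 - x) / 2) ^ n := by
      rw [mul_pow]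
      congr 1
      rw [pow_mul, Real.sq_sqrt hs0]
    rw [h1]
    have h2 : auxCoef c 0 n = c ^ n / ((2 * n)! : ℝ) := by
      unfold auxCoef
      have hn : (0:ℝ) < (n)! := by exact_mod_cast Nat.factorial_pos n
      have h2n : (0:ℝ) < ((2 * n)! : ℝ) := by exact_mod_cast (Nat.factorial_pos _)
      simp only [Nat.add_zero]
      field_simp
    rw [h2]
    have h4 : c ^ n * (x - 1) ^ n
        = (-1) ^ n * π ^ (2 * n) * ((1 - α) * (1 - x) / 2) ^ n := by
      rw [pow_mul, ← mul_pow, ← mul_pow, ← mul_pow]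
      congr 1
      rw [hc]
      ring
    rw [div_mul_eq_mul_div, h4]
    ring
  have hEqOn : Set.EqOn (fun x : ℝ => Real.cos (Real.pi * Real.sqrt ((1 - α) * (1 - x) / 2)))
      (auxG c 0) (Set.Ioo (0:ℝ) 1) := by
    intro x hx
    exact (hEq x hx.2.le).symm
  have hFPS := auxG_hasFPS hc0 0
  have hAnalytic : ContDiff ℝ (⊤ : ℕ∞) (auxG c 0) := by
    refine ContDiff.of_le (n := (⊤ : WithTop ℕ∞)) ?_ le_top
    rw [contDiff_omega_iff_analyticOnNhd]
    intro y _
    exact hFPS.analyticAt_of_mem (by rw [EMetric.mem_ball]; exact edist_lt_top _ _)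
  refine ⟨?_, ?_, ?_⟩
  · fun_prop
  · exact (hAnalytic.contDiffOn).congr fun x hx => hEqOn hx
  · intro k x hx
    have hUD : UniqueDiffOn ℝ (Set.Ioo (0:ℝ) 1) := isOpen_Ioo.uniqueDiffOn
    have e1 := iteratedDerivWithin_congr (n := k) hEqOn hx
    rw [e1, iteratedDerivWithin_of_isOpen'' isOpen_Ioo hx k, auxG_iteratedDeriv hc0]
    rcases Nat.eq_zero_or_pos k with hk | hk
    · subst hk
      rw [hEq x hx.2.le]
      apply Real.cos_nonneg_of_mem_Icc
      have hs0 : 0 ≤ (1 - α) * (1 - x) / 2 := by nlinarith [hx.1, hx.2]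
      have hs4 : (1 - α) * (1 - x) / 2 ≤ 1 / 4 := by nlinarith [hx.1, hx.2]
      have hsq : Real.sqrt ((1 - α) * (1 - x) / 2) ≤ 1 / 2 := by
        rw [show (1:ℝ)/2 = Real.sqrt (1/4) by
          rw [show (1:ℝ)/4 = (1/2)^2 by norm_num, Real.sqrt_sq (by norm_num)]]
        exact Real.sqrt_le_sqrt hs4
      have hsnn := Real.sqrt_nonneg ((1 - α) * (1 - x) / 2)
      constructor
      · nlinarith [Real.pi_pos]
      · nlinarith [Real.pi_pos]
    · exact auxG_nonneg hc0 hc6 (Nat.pos_iff_ne_zero.mp hk) hx.1.le hx.2.le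
end

section
/- For every integer k ≥ 1, the series a_k := ∑_{n=0}^∞ (−1)^n · π^{2n} / (2^n · (2n)! · ∏_{j=1}^{k} (2n+2j−1)) converges and its sum is strictly positive. -/
open Real Finset

/-!
The terms `b n = π ^ (2n) / (2 ^ n (2n)! ∏ ...)` are positive and bounded by `π ^ (2n) / (2n)!`,
so the series converges absolutely. Their ratio is
`b (n + 1) / b n = π ^ 2 / (2 (2n + 2) (2n + 2k + 1)) ≤ π ^ 2 / 12 < 1` once `k ≥ 1`,
so the series is alternating with strictly decreasing terms, and its sum is at least
`b 0 - b 1 > 0`.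
-/

theorem tsum_alternating_pos_of_strictAnti {E : Type*} [Ring E] [LinearOrder E] [IsOrderedRing E]
    [UniformSpace E] [IsUniformAddGroup E] [CompleteSpace E] [OrderClosedTopology E]
    {f : ℕ → E} (hfs : Summable f) (hfa : StrictAnti f) : 0 < ∑' n, (-1) ^ n * f n := by
  have h := hfa.antitone.alternating_series_le_tendsto hfs.tendsto_alternating_series_tsum 1
  simp only [mul_one, sum_range_succ, sum_range_zero, pow_zero, pow_one, zero_add, one_mul,
    neg_one_mul, ← sub_eq_add_neg] at h
  exact (sub_pos.mpr (hfa zero_lt_one)).trans_le h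

theorem mul_prod_Icc_odd_succ (n k : ℕ) :
    (2 * n + 1) * ∏ j ∈ Icc 1 k, (2 * (n + 1) + 2 * j - 1) =
      (∏ j ∈ Icc 1 k, (2 * n + 2 * j - 1)) * (2 * n + 2 * k + 1) := by
  induction k with
  | zero => simp
  | succ k ih =>
    rw [prod_Icc_succ_top (by omega), prod_Icc_succ_top (by omega), ← mul_assoc, ih,
      show 2 * (n + 1) + 2 * (k + 1) - 1 = 2 * n + 2 * (k + 1) + 1 by omega,
      show 2 * n + 2 * (k + 1) - 1 = 2 * n + 2 * k + 1 by omega]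

theorem one_le_prod_Icc_odd (n k : ℕ) : (1 : ℝ) ≤ ∏ j ∈ Icc 1 k, ((2 * n + 2 * j - 1 : ℕ) : ℝ) :=
  Finset.one_le_prod fun j hj => Nat.one_le_cast.mpr (by have := (mem_Icc.mp hj).1; omega)

noncomputable def seriesTerm (k n : ℕ) : ℝ :=
  π ^ (2 * n) / (2 ^ n * (2 * n).factorial * ∏ j ∈ Icc 1 k, ((2 * n + 2 * j - 1 : ℕ) : ℝ))

theorem seriesTerm_pos (k n : ℕ) : 0 < seriesTerm k n := by
  unfold seriesTerm
  have := one_le_prod_Icc_odd n k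
  positivity

theorem seriesTerm_le (k n : ℕ) : seriesTerm k n ≤ π ^ (2 * n) / (2 * n).factorial := by
  unfold seriesTerm
  gcongr
  calc ((2 * n).factorial : ℝ) = 1 * (2 * n).factorial * 1 := by ring
    _ ≤ _ := by gcongr; exacts [one_le_pow₀ one_le_two, one_le_prod_Icc_odd n k]

theorem summable_seriesTerm (k : ℕ) : Summable (seriesTerm k) :=
  .of_nonneg_of_le (fun n => (seriesTerm_pos k n).le) (seriesTerm_le k)
    ((Real.summable_pow_div_factorial π).comp_injective (mul_right_injective₀ two_ne_zero))

theorem seriesTerm_succ (k n : ℕ) :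
    seriesTerm k (n + 1) = seriesTerm k n * (π ^ 2 / (2 * (2 * n + 2) * (2 * n + 2 * k + 1))) := by
  have hprod := congrArg (Nat.cast (R := ℝ)) (mul_prod_Icc_odd_succ n k)
  push_cast [Nat.cast_prod] at hprod
  have := one_le_prod_Icc_odd n k
  have := one_le_prod_Icc_odd (n + 1) k
  unfold seriesTerm
  rw [div_mul_div_comm, div_eq_div_iff (by positivity) (by positivity),
    show 2 * (n + 1) = 2 * n + 1 + 1 by ring, Nat.factorial_succ, Nat.factorial_succ]
  push_cast
  linear_combination (-(π ^ (2 * n + 2) * 2 ^ (n + 1) * (2 * n).factorial * (2 * n + 2))) * hprod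

theorem seriesTerm_strictAnti {k : ℕ} (hk : 1 ≤ k) : StrictAnti (seriesTerm k) := by
  refine strictAnti_nat_of_succ_lt fun n => ?_
  rw [seriesTerm_succ]
  refine mul_lt_of_lt_one_right (seriesTerm_pos k n) ?_
  rw [div_lt_one (by positivity)]
  have : (1 : ℝ) ≤ k := by exact_mod_cast hk
  nlinarith [pi_lt_d2, pi_pos]

/-- For every integer `k ≥ 1`, the series
`a_k = ∑_{n=0}^∞ (-1)^n π^{2n} / (2^n (2n)! ((2n+1)(2n+3)⋯(2n+2k-1)))`
converges and its sum is strictly positive. -/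
theorem series_a_k_pos (k : ℕ) (hk : 1 ≤ k) :
    Summable (fun n : ℕ =>
      (-1 : ℝ) ^ n * Real.pi ^ (2 * n) /
        (2 ^ n * (Nat.factorial (2 * n)) *
          ∏ j ∈ Finset.Icc 1 k, ((2 * n + 2 * j - 1 : ℕ) : ℝ))) ∧
    0 < ∑' n : ℕ,
      (-1 : ℝ) ^ n * Real.pi ^ (2 * n) /
        (2 ^ n * (Nat.factorial (2 * n)) *
          ∏ j ∈ Finset.Icc 1 k, ((2 * n + 2 * j - 1 : ℕ) : ℝ)) := by
  simp only [mul_div_assoc]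
  exact ⟨(summable_seriesTerm k).alternating,
    tsum_alternating_pos_of_strictAnti (summable_seriesTerm k) (seriesTerm_strictAnti hk)⟩
end

section
/- Let λ > 0 and α ∈ [0,1] satisfy erf(√(λ(1−α)/8)) ≤ 1/√2. Then the function S_{λ,α} : [−1,1] → ℝ defined by S_{λ,α}(x) = 1 − 2·(erf(√(λ(1−α)(1−x)/8)))² is absolutely monotone on [0,1]; that is, S_{λ,α} is continuous on [0,1], has derivatives of all orders on (0,1), and S_{λ,α}^{(k)}(x) ≥ 0 for every integer k ≥ 0 and every x ∈ (0,1). -/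
open Real Set MeasureTheory

namespace ErfAux

lemma cont_integrand : Continuous fun y : ℝ => Real.exp (-y ^ 2) := by fun_prop

lemma erf_hasDerivAt (x : ℝ) :
    HasDerivAt erf (2 / Real.sqrt Real.pi * Real.exp (-x ^ 2)) x :=
  ((cont_integrand.integral_hasStrictDerivAt 0 x).hasDerivAt).const_mul _

lemma erf_differentiable : Differentiable ℝ erf :=
  fun x => (erf_hasDerivAt x).differentiableAt

lemma erf_nonneg {x : ℝ} (hx : 0 ≤ x) : 0 ≤ erf x := by
  have h : 0 ≤ ∫ y in (0:ℝ)..x, Real.exp (-y ^ 2) :=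
    intervalIntegral.integral_nonneg hx (fun u _ => (Real.exp_pos _).le)
  have : 0 ≤ 2 / Real.sqrt Real.pi := by positivity
  exact mul_nonneg this h

lemma erf_mono {a b : ℝ} (hab : a ≤ b) : erf a ≤ erf b := by
  unfold erf
  have h1 : IntervalIntegrable (fun y : ℝ => Real.exp (-y ^ 2)) MeasureTheory.volume 0 a :=
    cont_integrand.intervalIntegrable _ _
  have h2 : IntervalIntegrable (fun y : ℝ => Real.exp (-y ^ 2)) MeasureTheory.volume a b :=
    cont_integrand.intervalIntegrable _ _
  have hsplit := intervalIntegral.integral_add_adjacent_intervals h1 h2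
  have hpos : 0 ≤ ∫ y in a..b, Real.exp (-y ^ 2) :=
    intervalIntegral.integral_nonneg hab (fun u _ => (Real.exp_pos _).le)
  have hc : (0:ℝ) ≤ 2 / Real.sqrt Real.pi := by positivity
  nlinarith [hsplit]

lemma integral_sqrt_sub {u : ℝ} (hu : 0 ≤ u) :
    (∫ y in (0:ℝ)..Real.sqrt u, Real.exp (-y ^ 2))
      = Real.sqrt u * ∫ s in (0:ℝ)..1, Real.exp (-(u * s ^ 2)) := by
  rcases eq_or_lt_of_le hu with h | h
  · simp [← h]
  · have key := intervalIntegral.smul_integral_comp_mul_left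
      (f := fun y : ℝ => Real.exp (-y ^ 2)) (a := 0) (b := 1) (Real.sqrt u)
    simp only [mul_zero, mul_one, smul_eq_mul] at key
    have h2 : (∫ s in (0:ℝ)..1, Real.exp (-(Real.sqrt u * s) ^ 2))
        = ∫ s in (0:ℝ)..1, Real.exp (-(u * s ^ 2)) := by
      apply intervalIntegral.integral_congr
      intro s _
      simp only []
      rw [show -(Real.sqrt u * s) ^ 2 = -(u * s ^ 2) by rw [mul_pow, Real.sq_sqrt hu]]
    rw [← key, h2]

lemma erf_sqrt {u : ℝ} (hu : 0 ≤ u) :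
    erf (Real.sqrt u) = 2 / Real.sqrt Real.pi *
      (Real.sqrt u * ∫ s in (0:ℝ)..1, Real.exp (-(u * s ^ 2))) := by
  rw [erf, integral_sqrt_sub hu]

/-- `Φ k u = ∫₀¹ (1+s²)^k e^{-u(1+s²)} ds`. -/
noncomputable def Φ (k : ℕ) (u : ℝ) : ℝ :=
  ∫ s in (0:ℝ)..1, (1 + s ^ 2) ^ k * Real.exp (-(u * (1 + s ^ 2)))

lemma Φ_nonneg (k : ℕ) (u : ℝ) : 0 ≤ Φ k u :=
  intervalIntegral.integral_nonneg zero_le_one (fun s _ => by positivity)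

lemma Φ_cont_integrand (k : ℕ) (x : ℝ) :
    Continuous fun s : ℝ => (1 + s ^ 2) ^ k * Real.exp (-(x * (1 + s ^ 2))) := by fun_prop

lemma Φ_hasDerivAt (k : ℕ) (u : ℝ) : HasDerivAt (Φ k) (-Φ (k + 1) u) u := by
  have key := intervalIntegral.hasDerivAt_integral_of_dominated_loc_of_deriv_le
    (μ := volume) (a := (0:ℝ)) (b := 1)
    (F := fun x s => (1 + s ^ 2) ^ k * Real.exp (-(x * (1 + s ^ 2))))
    (F' := fun x s => -((1 + s ^ 2) ^ (k + 1) * Real.exp (-(x * (1 + s ^ 2)))))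
    (x₀ := u) (bound := fun _ => 2 ^ (k + 1) * Real.exp (2 * (|u| + 1)))
    (s := Metric.ball u 1) (Metric.ball_mem_nhds u one_pos)
    (Filter.Eventually.of_forall fun x =>
      ((Φ_cont_integrand k x).aestronglyMeasurable).restrict)
    ((Φ_cont_integrand k u).intervalIntegrable _ _)
    (((Φ_cont_integrand (k+1) u).neg).aestronglyMeasurable).restrict
    ?_ (intervalIntegrable_const) ?_
  · have h2 : (∫ s in (0:ℝ)..1, -((1 + s ^ 2) ^ (k + 1) * Real.exp (-(u * (1 + s ^ 2)))))
        = -Φ (k + 1) u := by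
      rw [intervalIntegral.integral_neg]; rfl
    have := key.2
    rw [h2] at this
    exact this
  · apply Filter.Eventually.of_forall
    intro s hs x hx
    rw [Set.uIoc_of_le (by norm_num : (0:ℝ) ≤ 1)] at hs
    have hs1 : 0 < s := hs.1
    have hs2 : s ≤ 1 := hs.2
    have hx' : |x| ≤ |u| + 1 := by
      have := Metric.mem_ball.mp hx
      rw [Real.dist_eq] at this
      have := abs_sub_abs_le_abs_sub x u
      linarith
    have hb1 : (1 + s ^ 2) ^ (k + 1) ≤ 2 ^ (k + 1) := by
      apply pow_le_pow_left₀ (by positivity)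
      nlinarith
    have hb2 : Real.exp (-(x * (1 + s ^ 2))) ≤ Real.exp (2 * (|u| + 1)) := by
      apply Real.exp_le_exp.mpr
      have h1 : -(x * (1 + s ^ 2)) ≤ |x| * (1 + s ^ 2) := by
        have := neg_abs_le (x * (1 + s ^ 2))
        rw [abs_mul, abs_of_pos (by positivity : (0:ℝ) < 1 + s ^ 2)] at this
        linarith
      have h2 : |x| * (1 + s ^ 2) ≤ (|u| + 1) * 2 :=
        mul_le_mul hx' (by nlinarith) (by positivity) (by positivity)
      linarith
    rw [norm_neg, norm_mul, norm_pow]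
    have : ‖(1 + s ^ 2)‖ = 1 + s ^ 2 := abs_of_pos (by positivity)
    rw [this, Real.norm_eq_abs, abs_of_pos (Real.exp_pos _)]
    have he : (0:ℝ) < Real.exp (-(x * (1 + s ^ 2))) := Real.exp_pos _
    calc (1 + s ^ 2) ^ (k+1) * Real.exp (-(x * (1 + s ^ 2)))
        ≤ 2 ^ (k+1) * Real.exp (-(x * (1 + s ^ 2))) := by
          apply mul_le_mul_of_nonneg_right hb1 he.le
      _ ≤ 2 ^ (k+1) * Real.exp (2 * (|u| + 1)) := by
          apply mul_le_mul_of_nonneg_left hb2 (by positivity)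
  · apply Filter.Eventually.of_forall
    intro s _ x _
    have h1 : HasDerivAt (fun x : ℝ => -(x * (1 + s ^ 2))) (-(1 + s ^ 2)) x :=
      (hasDerivAt_mul_const (1 + s ^ 2)).neg
    have h2 := h1.exp
    have h3 := h2.const_mul ((1 + s ^ 2) ^ k)
    convert h3 using 1
    · rfl
    rw [pow_succ]
    ring_nf

/-- Complex parametric integral extending `x ↦ ∫₀¹ e^{-x²s²} ds`. -/
noncomputable def cerf (z : ℂ) : ℂ :=
  ∫ s in (0:ℝ)..1, Complex.exp (-(z ^ 2 * (s:ℂ) ^ 2))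

lemma cerf_cont_integrand (z : ℂ) :
    Continuous fun s : ℝ => Complex.exp (-(z ^ 2 * (s:ℂ) ^ 2)) := by fun_prop

lemma cerf_diff (z : ℂ) : DifferentiableAt ℂ cerf z := by
  have key := intervalIntegral.hasDerivAt_integral_of_dominated_loc_of_deriv_le
    (μ := volume) (a := (0:ℝ)) (b := 1)
    (F := fun (x : ℂ) (s : ℝ) => Complex.exp (-(x ^ 2 * (s:ℂ) ^ 2)))
    (F' := fun (x : ℂ) (s : ℝ) => Complex.exp (-(x ^ 2 * (s:ℂ) ^ 2)) * -(2 * x * (s:ℂ) ^ 2))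
    (x₀ := z) (bound := fun _ => 2 * (‖z‖ + 1) * Real.exp ((‖z‖ + 1) ^ 2))
    (s := Metric.ball z 1) (Metric.ball_mem_nhds z one_pos)
    (Filter.Eventually.of_forall fun x =>
      ((cerf_cont_integrand x).aestronglyMeasurable).restrict)
    ((cerf_cont_integrand z).intervalIntegrable _ _)
    (((cerf_cont_integrand z).mul (by fun_prop)).aestronglyMeasurable).restrict
    ?_ (intervalIntegrable_const) ?_
  · exact key.2.differentiableAt
  · apply Filter.Eventually.of_forall
    intro s hs x hx
    rw [Set.uIoc_of_le (by norm_num : (0:ℝ) ≤ 1)] at hs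
    have hs1 : 0 < s := hs.1
    have hs2 : s ≤ 1 := hs.2
    have hx' : ‖x‖ ≤ ‖z‖ + 1 := by
      have h := Metric.mem_ball.mp hx
      have := norm_sub_norm_le x z
      rw [← dist_eq_norm] at this
      linarith
    rw [norm_mul, norm_neg]
    have hb1 : ‖Complex.exp (-(x ^ 2 * (s:ℂ) ^ 2))‖ ≤ Real.exp ((‖z‖ + 1) ^ 2) := by
      rw [Complex.norm_exp]
      apply Real.exp_le_exp.mpr
      have h1 : (-(x ^ 2 * (s:ℂ) ^ 2)).re ≤ ‖-(x ^ 2 * (s:ℂ) ^ 2)‖ := Complex.re_le_norm _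
      have h2 : ‖-(x ^ 2 * (s:ℂ) ^ 2)‖ = ‖x‖ ^ 2 * s ^ 2 := by
        rw [norm_neg, norm_mul, norm_pow, norm_pow, Complex.norm_real, Real.norm_eq_abs,
          sq_abs]
      have h3 : ‖x‖ ^ 2 * s ^ 2 ≤ (‖z‖ + 1) ^ 2 := by
        have ha : ‖x‖ ^ 2 ≤ (‖z‖ + 1) ^ 2 := by nlinarith [norm_nonneg x]
        have hb : ‖x‖ ^ 2 * s ^ 2 ≤ ‖x‖ ^ 2 * 1 :=
          mul_le_mul_of_nonneg_left (by nlinarith) (sq_nonneg _)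
        linarith
      linarith
    have hb2 : ‖2 * x * (s:ℂ) ^ 2‖ ≤ 2 * (‖z‖ + 1) := by
      rw [norm_mul, norm_mul, norm_pow, Complex.norm_real, Real.norm_eq_abs, sq_abs]
      have h2 : ‖(2:ℂ)‖ = 2 := by norm_num
      rw [h2]
      have : s ^ 2 ≤ 1 := by nlinarith
      nlinarith [norm_nonneg x]
    calc ‖Complex.exp (-(x ^ 2 * (s:ℂ) ^ 2))‖ * ‖2 * x * (s:ℂ) ^ 2‖
        ≤ Real.exp ((‖z‖ + 1) ^ 2) * (2 * (‖z‖ + 1)) :=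
          mul_le_mul hb1 hb2 (norm_nonneg _) (Real.exp_pos _).le
      _ = 2 * (‖z‖ + 1) * Real.exp ((‖z‖ + 1) ^ 2) := by ring
  · apply Filter.Eventually.of_forall
    intro s _ x _
    have h1 : HasDerivAt (fun x : ℂ => x ^ 2) (2 * x) x := by
      simpa using hasDerivAt_pow 2 x
    have h2 := ((h1.mul_const ((s:ℂ) ^ 2)).neg).cexp
    exact h2

lemma cerf_analytic (z : ℂ) : AnalyticAt ℂ cerf z :=
  Differentiable.analyticAt (fun w => cerf_diff w) z

lemma integral_x_sub (x : ℝ) :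
    (∫ y in (0:ℝ)..x, Real.exp (-y ^ 2))
      = x * ∫ s in (0:ℝ)..1, Real.exp (-(x ^ 2 * s ^ 2)) := by
  rcases eq_or_ne x 0 with h | h
  · simp [h]
  · have key := intervalIntegral.smul_integral_comp_mul_left
      (f := fun y : ℝ => Real.exp (-y ^ 2)) (a := 0) (b := 1) x
    simp only [mul_zero, mul_one, smul_eq_mul] at key
    have h2 : (∫ s in (0:ℝ)..1, Real.exp (-(x * s) ^ 2))
        = ∫ s in (0:ℝ)..1, Real.exp (-(x ^ 2 * s ^ 2)) := by
      apply intervalIntegral.integral_congr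
      intro s _
      simp only []
      rw [show -(x * s) ^ 2 = -(x ^ 2 * s ^ 2) by ring]
    rw [← key, h2]

lemma cerf_real (x : ℝ) :
    (cerf (x:ℂ)).re = ∫ s in (0:ℝ)..1, Real.exp (-(x ^ 2 * s ^ 2)) := by
  have h : ∀ s : ℝ, Complex.exp (-((x:ℂ) ^ 2 * (s:ℂ) ^ 2))
      = ((Real.exp (-(x ^ 2 * s ^ 2)) : ℝ) : ℂ) := by
    intro s
    rw [Complex.ofReal_exp]
    push_cast
    ring_nf
  unfold cerf
  rw [intervalIntegral.integral_congr (g := fun s : ℝ => ((Real.exp (-(x ^ 2 * s ^ 2)) : ℝ) : ℂ))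
    (fun s _ => h s)]
  rw [intervalIntegral.integral_ofReal, Complex.ofReal_re]

lemma erf_eq (x : ℝ) : erf x = 2 / Real.sqrt Real.pi * (x * (cerf (x:ℂ)).re) := by
  rw [erf, integral_x_sub, cerf_real]

lemma erf_analyticAt (x : ℝ) : AnalyticAt ℝ erf x := by
  have hfun : erf = fun x : ℝ => 2 / Real.sqrt Real.pi * (x * (cerf (x:ℂ)).re) :=
    funext erf_eq
  rw [hfun]
  have h1 : AnalyticAt ℝ (fun x : ℝ => cerf (x:ℂ)) x :=
    ((cerf_analytic (x:ℂ)).restrictScalars).comp (Complex.ofRealCLM.analyticAt x)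
  have h2 : AnalyticAt ℝ (fun x : ℝ => (cerf (x:ℂ)).re) x :=
    (Complex.reCLM.analyticAt _).comp h1
  exact analyticAt_const.mul (analyticAt_id.mul h2)

lemma erf_contDiffAt (x : ℝ) : ContDiffAt ℝ (⊤ : ℕ∞) erf x :=
  (erf_analyticAt x).contDiffAt


lemma Φ_zero (t : ℝ) :
    Φ 0 t = Real.exp (-t) * ∫ s in (0:ℝ)..1, Real.exp (-(t * s ^ 2)) := by
  unfold Φ
  rw [← intervalIntegral.integral_const_mul]
  apply intervalIntegral.integral_congr
  intro s _
  simp only [pow_zero, one_mul]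
  rw [show -(t * (1 + s ^ 2)) = -t + -(t * s ^ 2) by ring, Real.exp_add]

lemma alg_aux (E I r c sπ : ℝ) (hr : r ≠ 0) (hπ : sπ ≠ 0)
    (hππ : sπ * sπ = Real.pi) :
    8 / Real.pi * c * (E * I)
      = -(2 * (2 * (2 / sπ * (r * I)) * (2 / sπ * E * (1 / (2 * r) * (c * -1))))) := by
  rw [← hππ]
  field_simp
  ring

lemma S_hasDerivAt (c : ℝ) (hc : 0 < c) (x : ℝ) (hx : x < 1) :
    HasDerivAt (fun x : ℝ => 1 - 2 * erf (Real.sqrt (c * (1 - x))) ^ 2)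
      (8 / Real.pi * c ^ 1 * Φ 0 (c * (1 - x))) x := by
  have ht : 0 < c * (1 - x) := mul_pos hc (by linarith)
  have h₁ : HasDerivAt (fun x : ℝ => c * (1 - x)) (c * -1) x :=
    ((hasDerivAt_id x).const_sub 1).const_mul c
  have h₂ : HasDerivAt Real.sqrt (1 / (2 * Real.sqrt (c * (1 - x)))) (c * (1 - x)) :=
    Real.hasDerivAt_sqrt ht.ne'
  have h₃ := erf_hasDerivAt (Real.sqrt (c * (1 - x)))
  have hs : HasDerivAt (fun x : ℝ => Real.sqrt (c * (1 - x)))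
      (1 / (2 * Real.sqrt (c * (1 - x))) * (c * -1)) x := by
    have := h₂.comp x h₁
    simpa [Function.comp_def] using this
  have he : HasDerivAt (fun x : ℝ => erf (Real.sqrt (c * (1 - x))))
      (2 / Real.sqrt Real.pi * Real.exp (-Real.sqrt (c * (1 - x)) ^ 2) *
        (1 / (2 * Real.sqrt (c * (1 - x))) * (c * -1))) x := by
    have := h₃.comp x hs
    simpa [Function.comp_def] using this
  have hS := ((he.pow 2).const_mul 2).const_sub 1
  convert hS using 1
  · rfl
  · rfl
  · rfl
  push_cast
  simp only [pow_one]
  rw [Real.sq_sqrt ht.le, Φ_zero, erf_sqrt ht.le]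
  have hπ : Real.sqrt Real.pi ≠ 0 := by positivity
  have ht' : Real.sqrt (c * (1 - x)) ≠ 0 := by positivity
  have hππ : Real.sqrt Real.pi * Real.sqrt Real.pi = Real.pi :=
    Real.mul_self_sqrt Real.pi_pos.le
  rw [show Real.exp (-(c * (1 - x))) * ∫ s in (0:ℝ)..1, Real.exp (-(c * (1 - x) * s ^ 2))
      = (Real.exp (-(c * (1 - x)))) * ∫ s in (0:ℝ)..1, Real.exp (-(c * (1 - x) * s ^ 2)) from rfl]
  exact alg_aux (Real.exp (-(c * (1 - x))))
    (∫ s in (0:ℝ)..1, Real.exp (-(c * (1 - x) * s ^ 2)))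
    (Real.sqrt (c * (1 - x))) c (Real.sqrt Real.pi) ht' hπ hππ

lemma T_hasDerivAt (c : ℝ) (k : ℕ) (x : ℝ) :
    HasDerivAt (fun y : ℝ => 8 / Real.pi * c ^ (k + 1) * Φ k (c * (1 - y)))
      (8 / Real.pi * c ^ (k + 2) * Φ (k + 1) (c * (1 - x))) x := by
  have h₁ : HasDerivAt (fun y : ℝ => c * (1 - y)) (c * -1) x :=
    ((hasDerivAt_id x).const_sub 1).const_mul c
  have h₂ := (Φ_hasDerivAt k (c * (1 - x))).comp x h₁
  have h₃ := h₂.const_mul (8 / Real.pi * c ^ (k + 1))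
  have h₄ : HasDerivAt (fun y : ℝ => 8 / Real.pi * c ^ (k + 1) * Φ k (c * (1 - y)))
      (8 / Real.pi * c ^ (k + 1) * (-Φ (k + 1) (c * (1 - x)) * (c * -1))) x := by
    simpa [Function.comp] using h₃
  convert h₄ using 1
  rw [pow_succ]
  ring

lemma iteratedDeriv_S (c : ℝ) (hc : 0 < c) (k : ℕ) :
    ∀ x < (1:ℝ), iteratedDeriv (k + 1) (fun x : ℝ => 1 - 2 * erf (Real.sqrt (c * (1 - x))) ^ 2) x
      = 8 / Real.pi * c ^ (k + 1) * Φ k (c * (1 - x)) := by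
  induction k with
  | zero =>
    intro x hx
    rw [iteratedDeriv_one]
    exact (S_hasDerivAt c hc x hx).deriv
  | succ k ih =>
    intro x hx
    rw [iteratedDeriv_succ]
    have hev : iteratedDeriv (k + 1) (fun x : ℝ => 1 - 2 * erf (Real.sqrt (c * (1 - x))) ^ 2)
        =ᶠ[nhds x] fun y : ℝ => 8 / Real.pi * c ^ (k + 1) * Φ k (c * (1 - y)) :=
      Filter.eventuallyEq_of_mem (Iio_mem_nhds hx) (fun y hy => ih y hy)
    rw [hev.deriv_eq]
    exact (T_hasDerivAt c k x).deriv

lemma itDW {f : ℝ → ℝ} {x : ℝ} (n : ℕ) (hx : x ∈ Set.Ioo (0:ℝ) 1) :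
    iteratedDerivWithin n f (Set.Ioo 0 1) x = iteratedDeriv n f x := by
  simp only [iteratedDerivWithin, iteratedDeriv,
    iteratedFDerivWithin_of_isOpen n isOpen_Ioo hx]

lemma iteratedDeriv_const' (n : ℕ) (a : ℝ) :
    iteratedDeriv (n + 1) (fun _ : ℝ => a) = fun _ => 0 := by
  induction n with
  | zero =>
    funext x
    rw [iteratedDeriv_one]
    simp
  | succ n ih =>
    funext x
    rw [iteratedDeriv_succ, ih]
    simp


end ErfAux

/-- For `λ > 0` and `α ∈ [0,1]` with `erf(√(λ(1-α)/8)) ≤ 1/√2`, the function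
`S_{λ,α}(x) = 1 - 2 (erf(√(λ(1-α)(1-x)/8)))²` is absolutely monotone on `[0,1]`:
it is continuous on `[0,1]`, has derivatives of all orders on `(0,1)`, and all these
derivatives are nonnegative on `(0,1)`. -/
theorem S_lambda_alpha_absolutely_monotone (l α : ℝ) (hl : 0 < l)
    (hα : α ∈ Set.Icc (0:ℝ) 1)
    (hbound : erf (Real.sqrt (l * (1 - α) / 8)) ≤ 1 / Real.sqrt 2) :
    ContinuousOn
      (fun x : ℝ => 1 - 2 * (erf (Real.sqrt (l * (1 - α) * (1 - x) / 8))) ^ 2)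
      (Set.Icc 0 1) ∧
    ContDiffOn ℝ (⊤ : ℕ∞)
      (fun x : ℝ => 1 - 2 * (erf (Real.sqrt (l * (1 - α) * (1 - x) / 8))) ^ 2)
      (Set.Ioo 0 1) ∧
    ∀ (k : ℕ), ∀ x ∈ Set.Ioo (0:ℝ) 1,
      0 ≤ iteratedDerivWithin k
        (fun x : ℝ => 1 - 2 * (erf (Real.sqrt (l * (1 - α) * (1 - x) / 8))) ^ 2)
        (Set.Ioo 0 1) x := by
  obtain ⟨hα0, hα1⟩ := hα
  set c := l * (1 - α) / 8 with hc_def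
  have hc0 : 0 ≤ c := by
    rw [hc_def]
    have : 0 ≤ 1 - α := by linarith
    positivity
  have hfun : (fun x : ℝ => 1 - 2 * (erf (Real.sqrt (l * (1 - α) * (1 - x) / 8))) ^ 2)
      = fun x : ℝ => 1 - 2 * erf (Real.sqrt (c * (1 - x))) ^ 2 := by
    funext x
    rw [show l * (1 - α) * (1 - x) / 8 = c * (1 - x) by rw [hc_def]; ring]
  refine ⟨?_, ?_, ?_⟩
  · rw [hfun]
    have h1 : Continuous fun x : ℝ => erf (Real.sqrt (c * (1 - x))) :=
      ErfAux.erf_differentiable.continuous.comp (Real.continuous_sqrt.comp (by continuity))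
    exact (continuous_const.sub (continuous_const.mul (h1.pow 2))).continuousOn
  · rw [hfun]
    rcases eq_or_lt_of_le hc0 with hceq | hc
    · have hfun0 : (fun x : ℝ => 1 - 2 * erf (Real.sqrt (c * (1 - x))) ^ 2)
          = fun _ : ℝ => 1 := by
        funext x
        rw [← hceq]
        norm_num [erf]
      rw [hfun0]
      exact contDiffOn_const
    · intro x hx
      have ht : 0 < c * (1 - x) := mul_pos hc (by linarith [hx.2])
      have hinner : ContDiff ℝ (⊤ : ℕ∞) (fun x : ℝ => c * (1 - x)) :=
        contDiff_const.mul (contDiff_const.sub contDiff_id)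
      have hsqrt : ContDiffAt ℝ (⊤ : ℕ∞) Real.sqrt (c * (1 - x)) :=
        Real.contDiffAt_sqrt ht.ne'
      have hcomp : ContDiffAt ℝ (⊤ : ℕ∞) (fun x : ℝ => Real.sqrt (c * (1 - x))) x :=
        hsqrt.comp x hinner.contDiffAt
      have herf : ContDiffAt ℝ (⊤ : ℕ∞) (fun x : ℝ => erf (Real.sqrt (c * (1 - x)))) x :=
        (ErfAux.erf_contDiffAt _).comp x hcomp
      exact (contDiffAt_const.sub (contDiffAt_const.mul (herf.pow 2))).contDiffWithinAt
  · intro k x hx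
    rw [hfun, ErfAux.itDW k hx]
    rcases eq_or_lt_of_le hc0 with hceq | hc
    · have hfun0 : (fun x : ℝ => 1 - 2 * erf (Real.sqrt (c * (1 - x))) ^ 2)
          = fun _ : ℝ => 1 := by
        funext x
        rw [← hceq]
        norm_num [erf]
      rw [hfun0]
      cases k with
      | zero => norm_num
      | succ n => simp [ErfAux.iteratedDeriv_const' n 1]
    · cases k with
      | zero =>
        simp only [iteratedDeriv_zero]
        have ht : 0 < c * (1 - x) := mul_pos hc (by linarith [hx.2])
        have hle : c * (1 - x) ≤ c := by nlinarith [hx.1]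
        have h1 : erf (Real.sqrt (c * (1 - x))) ≤ erf (Real.sqrt c) :=
          ErfAux.erf_mono (Real.sqrt_le_sqrt hle)
        have h2 : erf (Real.sqrt (c * (1 - x))) ≤ 1 / Real.sqrt 2 := h1.trans hbound
        have h0 : 0 ≤ erf (Real.sqrt (c * (1 - x))) :=
          ErfAux.erf_nonneg (Real.sqrt_nonneg _)
        have hsq : erf (Real.sqrt (c * (1 - x))) ^ 2 ≤ (1 / Real.sqrt 2) ^ 2 :=
          pow_le_pow_left₀ h0 h2 2
        have hhalf : (1 / Real.sqrt 2) ^ 2 = 1 / 2 := by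
          rw [div_pow, one_pow, Real.sq_sqrt (by norm_num : (0:ℝ) ≤ 2)]
        nlinarith
      | succ n =>
        rw [ErfAux.iteratedDeriv_S c hc n x hx.2]
        have := ErfAux.Φ_nonneg n (c * (1 - x))
        have hπ : 0 < Real.pi := Real.pi_pos
        positivity
end

section
/- Let d ≥ 1, let ρ₀ be a correlation function on ℝ^d, let α ∈ [0,1] and λ > 0 satisfy erf(√(λ(1−α)/8)) ≤ 1/√2, and set ρ = (1−α)ρ₀ + α. Then the function x ↦ 1 − 2·(erf(√(λ(1−ρ(x))/8)))² is again a correlation function on ℝ^d. -/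
open Real Set Finset

/-- A correlation function on `ℝ^d`: continuous, equal to `1` at the origin, even,
and positive definite. -/
def IsCorrelationFunction (d : ℕ) (ρ : EuclideanSpace ℝ (Fin d) → ℝ) : Prop :=
  Continuous ρ ∧ ρ 0 = 1 ∧ (∀ x, ρ (-x) = ρ x) ∧
    ∀ (n : ℕ) (t : Fin n → EuclideanSpace ℝ (Fin d)) (c : Fin n → ℝ),
      0 ≤ ∑ i, ∑ j, c i * c j * ρ (t i - t j)

/-!
With `K v = ∫₀¹ e^{-v(1+t²)}/(1+t²) dt` (`owenIntegral`), differentiating in `x` shows that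
`(∫₀^x e^{-y²} dy)² + K(x²)` is constant, equal to `K 0 = π/4`; hence
`1 - 2 erf(√v)² = 8/π · K v - 1`. For `v = β(1 - ρ₀ x)` with `β = λ(1-α)/8`, the integrand of
`K v` is `e^{-β(1+t²)}/(1+t²) · exp(β(1+t²) ρ₀ x)`. By the Schur product theorem all entrywise
powers of a positive semidefinite matrix `A` are positive semidefinite, so expanding `exp` in its
power series gives `∑ cᵢcⱼ exp(Aᵢⱼ) ≥ (∑ cᵢ)²` (the constant term). Integrating in `t` yields
`∑ cᵢcⱼ K(vᵢⱼ) ≥ (∑ cᵢ)² K β`, so the quadratic form of the new kernel is at least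
`(∑ cᵢ)² (1 - 2 erf(√β)²)`, which is nonnegative by the hypothesis on `erf`.
-/

open Matrix
open scoped Nat ComplexOrder

theorem erf_zero : erf 0 = 0 := by simp [erf]

theorem erf_nonneg {x : ℝ} (hx : 0 ≤ x) : 0 ≤ erf x :=
  mul_nonneg (by positivity) (intervalIntegral.integral_nonneg hx fun _ _ => (exp_pos _).le)

theorem hasDerivAt_integral_exp_neg_sq (x : ℝ) :
    HasDerivAt (fun x => ∫ y in (0:ℝ)..x, exp (-y ^ 2)) (exp (-x ^ 2)) x :=
  intervalIntegral.integral_hasDerivAt_right ((by fun_prop : Continuous _).intervalIntegrable _ _)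
    (Continuous.stronglyMeasurableAtFilter (by fun_prop) _ _) (by fun_prop)

@[fun_prop]
theorem continuous_erf : Continuous erf :=
  continuous_const.mul <| continuous_iff_continuousAt.2 fun x =>
    (hasDerivAt_integral_exp_neg_sq x).continuousAt

/-- `2π · T(√(2v), 1)` in terms of Owen's `T` function. -/
noncomputable def owenIntegral (v : ℝ) : ℝ :=
  ∫ t in (0:ℝ)..1, exp (-v * (1 + t ^ 2)) / (1 + t ^ 2)

theorem continuous_owenIntegrand (v : ℝ) :
    Continuous fun t : ℝ => exp (-v * (1 + t ^ 2)) / (1 + t ^ 2) := by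
  fun_prop (disch := intro t; positivity)

theorem owenIntegral_zero : owenIntegral 0 = π / 4 := by
  simp [owenIntegral, integral_inv_one_add_sq]

theorem hasDerivAt_owenIntegral_sq (x₀ : ℝ) :
    HasDerivAt (fun x => owenIntegral (x ^ 2))
      (-2 * exp (-x₀ ^ 2) * ∫ y in (0:ℝ)..x₀, exp (-y ^ 2)) x₀ := by
  have hderiv (t x : ℝ) : HasDerivAt (fun x => exp (-x ^ 2 * (1 + t ^ 2)) / (1 + t ^ 2))
      (-2 * x * exp (-x ^ 2 * (1 + t ^ 2))) x := by
    refine ((((hasDerivAt_pow 2 x).fun_neg.mul_const (1 + t ^ 2)).exp).div_const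
      (1 + t ^ 2)).congr_deriv ?_
    field_simp
    ring
  have hbound (t : ℝ) : ∀ x ∈ Metric.ball x₀ 1,
      ‖-2 * x * exp (-x ^ 2 * (1 + t ^ 2))‖ ≤ 2 * (|x₀| + 1) := by
    intro x hx
    have hx' : |x| ≤ |x₀| + 1 := by
      rw [Metric.mem_ball, Real.dist_eq] at hx
      linarith [abs_sub_abs_le_abs_sub x x₀]
    have hexp : exp (-x ^ 2 * (1 + t ^ 2)) ≤ 1 := exp_le_one_iff.2 (by nlinarith [sq_nonneg x])
    calc ‖-2 * x * exp (-x ^ 2 * (1 + t ^ 2))‖ = 2 * |x| * exp (-x ^ 2 * (1 + t ^ 2)) := by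
          simp
      _ ≤ 2 * |x| * 1 := by gcongr
      _ ≤ 2 * (|x₀| + 1) := by linarith
  have h := (intervalIntegral.hasDerivAt_integral_of_dominated_loc_of_deriv_le
    (μ := MeasureTheory.volume) (a := 0) (b := 1)
    (Metric.ball_mem_nhds x₀ one_pos)
    (.of_forall fun x => (continuous_owenIntegrand (x ^ 2)).aestronglyMeasurable)
    ((continuous_owenIntegrand (x₀ ^ 2)).intervalIntegrable 0 1)
    (Continuous.aestronglyMeasurable (by fun_prop))
    (.of_forall fun t _ => hbound t) intervalIntegrable_const
    (.of_forall fun t _ x _ => hderiv t x)).2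
  have hsplit (t : ℝ) : -2 * x₀ * exp (-x₀ ^ 2 * (1 + t ^ 2))
      = -2 * exp (-x₀ ^ 2) * (x₀ * exp (-(x₀ * t) ^ 2)) := by
    rw [mul_mul_mul_comm, ← exp_add]
    ring_nf
  have hsubst : x₀ * ∫ t in (0:ℝ)..1, exp (-(x₀ * t) ^ 2) = ∫ y in (0:ℝ)..x₀, exp (-y ^ 2) := by
    simpa using intervalIntegral.smul_integral_comp_mul_left (a := 0) (b := 1)
      (fun y => exp (-y ^ 2)) x₀
  simp_rw [hsplit, intervalIntegral.integral_const_mul, hsubst] at h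
  exact h

theorem sq_integral_exp_neg_sq_add_owenIntegral (x : ℝ) :
    (∫ y in (0:ℝ)..x, exp (-y ^ 2)) ^ 2 + owenIntegral (x ^ 2) = π / 4 := by
  have hderiv (y : ℝ) : HasDerivAt
      (fun x => (∫ y in (0:ℝ)..x, exp (-y ^ 2)) ^ 2 + owenIntegral (x ^ 2)) 0 y := by
    refine (((hasDerivAt_integral_exp_neg_sq y).fun_pow 2).fun_add
      (hasDerivAt_owenIntegral_sq y)).congr_deriv ?_
    ring
  have := is_const_of_deriv_eq_zero (fun y => (hderiv y).differentiableAt)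
    (fun y => (hderiv y).deriv) x 0
  simpa [owenIntegral_zero] using this

theorem erf_sqrt_sq {v : ℝ} (hv : 0 ≤ v) : erf (√v) ^ 2 = 1 - 4 / π * owenIntegral v := by
  have h := sq_integral_exp_neg_sq_add_owenIntegral √v
  rw [sq_sqrt hv] at h
  rw [erf, mul_pow, div_pow, sq_sqrt pi_pos.le, eq_sub_of_add_eq h]
  field_simp
  ring

namespace Matrix

variable {ι : Type*} [Fintype ι]

theorem PosSemidef.map_pow {𝕜 : Type*} [RCLike 𝕜] {A : Matrix ι ι 𝕜} (hA : A.PosSemidef)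
    (k : ℕ) : (A.map (· ^ k)).PosSemidef := by
  induction k with
  | zero =>
    convert posSemidef_vecMulVec_self_star (fun _ : ι => (1 : 𝕜)) using 1
    ext i j
    simp [vecMulVec_apply]
  | succ k ih =>
    convert ih.hadamard hA using 1
    ext i j
    simp [pow_succ]

theorem dotProduct_mulVec_self_eq_sum_sum (A : Matrix ι ι ℝ) (c : ι → ℝ) :
    c ⬝ᵥ A *ᵥ c = ∑ i, ∑ j, c i * c j * A i j := by
  simp only [dotProduct, mulVec, Finset.mul_sum]
  exact Finset.sum_congr rfl fun i _ => Finset.sum_congr rfl fun j _ => by ring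

theorem PosSemidef.sum_sum_mul_nonneg {A : Matrix ι ι ℝ} (hA : A.PosSemidef) (c : ι → ℝ) :
    0 ≤ ∑ i, ∑ j, c i * c j * A i j := by
  simpa [A.dotProduct_mulVec_self_eq_sum_sum] using hA.dotProduct_mulVec_nonneg c

theorem posSemidef_of_sum_sum_mul_nonneg {A : Matrix ι ι ℝ} (hsymm : ∀ i j, A i j = A j i)
    (h : ∀ c : ι → ℝ, 0 ≤ ∑ i, ∑ j, c i * c j * A i j) : A.PosSemidef := by
  refine .of_dotProduct_mulVec_nonneg (ext fun i j => hsymm j i) fun c => ?_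
  simpa [A.dotProduct_mulVec_self_eq_sum_sum] using h c

theorem PosSemidef.sq_sum_le_sum_sum_exp {A : Matrix ι ι ℝ} (hA : A.PosSemidef) (c : ι → ℝ) :
    (∑ i, c i) ^ 2 ≤ ∑ i, ∑ j, c i * c j * exp (A i j) := by
  have hsum : HasSum (fun k : ℕ => (∑ i, ∑ j, c i * c j * A i j ^ k) / k !)
      (∑ i, ∑ j, c i * c j * exp (A i j)) := by
    simp_rw [Finset.sum_div, mul_div_assoc, Real.exp_eq_exp_ℝ]
    exact hasSum_sum fun i _ => hasSum_sum fun j _ =>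
      (NormedSpace.expSeries_div_hasSum_exp (A i j)).mul_left (c i * c j)
  calc (∑ i, c i) ^ 2 = (∑ i, ∑ j, c i * c j * A i j ^ 0) / (0 ! : ℝ) := by
        simp [sq, Finset.sum_mul_sum]
    _ ≤ _ := le_hasSum hsum 0 fun k _ =>
        div_nonneg ((hA.map_pow k).sum_sum_mul_nonneg c) (by positivity)

end Matrix

namespace IsCorrelationFunction

variable {d : ℕ} {ρ : EuclideanSpace ℝ (Fin d) → ℝ}

theorem le_one (hρ : IsCorrelationFunction d ρ) (x : EuclideanSpace ℝ (Fin d)) : ρ x ≤ 1 := by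
  obtain ⟨-, h0, heven, hpd⟩ := hρ
  have h := hpd 2 ![0, x] ![1, -1]
  simp only [Fin.sum_univ_two, cons_val_zero, cons_val_one, sub_self, sub_zero, zero_sub, h0,
    heven] at h
  linarith

theorem posSemidef (hρ : IsCorrelationFunction d ρ) {n : ℕ}
    (t : Fin n → EuclideanSpace ℝ (Fin d)) : (Matrix.of fun i j => ρ (t i - t j)).PosSemidef := by
  obtain ⟨-, -, heven, hpd⟩ := hρ
  exact posSemidef_of_sum_sum_mul_nonneg (fun i j => by simp [← heven (t j - t i)]) (hpd n t)

theorem sq_sum_mul_exp_le (hρ : IsCorrelationFunction d ρ) {μ : ℝ} (hμ : 0 ≤ μ) {n : ℕ}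
    (t : Fin n → EuclideanSpace ℝ (Fin d)) (c : Fin n → ℝ) :
    (∑ i, c i) ^ 2 * exp (-μ) ≤ ∑ i, ∑ j, c i * c j * exp (-(μ * (1 - ρ (t i - t j)))) := by
  have hexp := ((hρ.posSemidef t).smul hμ).sq_sum_le_sum_sum_exp c
  simp only [Matrix.smul_apply, of_apply, smul_eq_mul] at hexp
  calc (∑ i, c i) ^ 2 * exp (-μ)
      ≤ (∑ i, ∑ j, c i * c j * exp (μ * ρ (t i - t j))) * exp (-μ) := by gcongr
    _ = _ := by
      simp_rw [Finset.sum_mul, mul_assoc, ← exp_add]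
      ring_nf

theorem sq_sum_mul_owenIntegral_le (hρ : IsCorrelationFunction d ρ) {β : ℝ} (hβ : 0 ≤ β)
    {n : ℕ} (t : Fin n → EuclideanSpace ℝ (Fin d)) (c : Fin n → ℝ) :
    (∑ i, c i) ^ 2 * owenIntegral β ≤
      ∑ i, ∑ j, c i * c j * owenIntegral (β * (1 - ρ (t i - t j))) := by
  set v : Fin n → Fin n → ℝ := fun i j => β * (1 - ρ (t i - t j))
  have hcont (i j : Fin n) :
      Continuous fun s => c i * c j * (exp (-v i j * (1 + s ^ 2)) / (1 + s ^ 2)) :=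
    (continuous_owenIntegrand _).const_mul _
  have hpointwise (s : ℝ) : (∑ i, c i) ^ 2 * (exp (-β * (1 + s ^ 2)) / (1 + s ^ 2)) ≤
      ∑ i, ∑ j, c i * c j * (exp (-v i j * (1 + s ^ 2)) / (1 + s ^ 2)) := by
    have h := hρ.sq_sum_mul_exp_le (by positivity : 0 ≤ β * (1 + s ^ 2)) t c
    simp_rw [← mul_div_assoc, ← Finset.sum_div]
    gcongr
    have hv (i j : Fin n) : v i j * (1 + s ^ 2) = β * (1 + s ^ 2) * (1 - ρ (t i - t j)) := by
      ring
    simpa only [neg_mul, hv] using h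
  calc (∑ i, c i) ^ 2 * owenIntegral β
      = ∫ s in (0:ℝ)..1, (∑ i, c i) ^ 2 * (exp (-β * (1 + s ^ 2)) / (1 + s ^ 2)) :=
        (intervalIntegral.integral_const_mul _ _).symm
    _ ≤ ∫ s in (0:ℝ)..1, ∑ i, ∑ j, c i * c j * (exp (-v i j * (1 + s ^ 2)) / (1 + s ^ 2)) :=
        intervalIntegral.integral_mono_on zero_le_one
          (((continuous_owenIntegrand β).const_mul _).intervalIntegrable _ _)
          ((continuous_finsetSum _ fun i _ => continuous_finsetSum _ fun j _ =>
            hcont i j).intervalIntegrable _ _) fun s _ => hpointwise s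
    _ = _ := by
      rw [intervalIntegral.integral_finsetSum fun i _ =>
        (continuous_finsetSum _ fun j _ => hcont i j).intervalIntegrable _ _]
      refine Finset.sum_congr rfl fun i _ => ?_
      rw [intervalIntegral.integral_finsetSum fun j _ => (hcont i j).intervalIntegrable _ _]
      exact Finset.sum_congr rfl fun j _ => intervalIntegral.integral_const_mul _ _

theorem one_sub_two_mul_erf_sq (hρ : IsCorrelationFunction d ρ) {β : ℝ} (hβ : 0 ≤ β)
    (hβerf : erf √β ^ 2 ≤ 1 / 2) :
    IsCorrelationFunction d fun x => 1 - 2 * erf √(β * (1 - ρ x)) ^ 2 := by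
  obtain ⟨hcont, h0, heven, -⟩ := id hρ
  refine ⟨by fun_prop, by simp [h0, erf_zero], fun x => by simp only [heven], fun n t c => ?_⟩
  have hv (x : EuclideanSpace ℝ (Fin d)) : 0 ≤ β * (1 - ρ x) :=
    mul_nonneg hβ (sub_nonneg.2 (hρ.le_one x))
  calc 0 ≤ (∑ i, c i) ^ 2 * (1 - 2 * erf √β ^ 2) := mul_nonneg (sq_nonneg _) (by linarith)
    _ = 8 / π * ((∑ i, c i) ^ 2 * owenIntegral β) - (∑ i, c i) ^ 2 := by
        rw [erf_sqrt_sq hβ]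
        ring
    _ ≤ 8 / π * ∑ i, ∑ j, c i * c j * owenIntegral (β * (1 - ρ (t i - t j))) - (∑ i, c i) ^ 2 := by
        gcongr
        exact hρ.sq_sum_mul_owenIntegral_le hβ t c
    _ = ∑ i, ∑ j, c i * c j * (1 - 2 * erf √(β * (1 - ρ (t i - t j))) ^ 2) := by
        rw [sq, Finset.sum_mul_sum, Finset.mul_sum, ← Finset.sum_sub_distrib]
        refine Finset.sum_congr rfl fun i _ => ?_
        rw [Finset.mul_sum, ← Finset.sum_sub_distrib]
        refine Finset.sum_congr rfl fun j _ => ?_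
        rw [erf_sqrt_sq (hv _)]
        ring

end IsCorrelationFunction

theorem S_transform_of_correlation_general (d : ℕ)
    (ρ₀ : EuclideanSpace ℝ (Fin d) → ℝ) (hρ₀ : IsCorrelationFunction d ρ₀)
    (α l : ℝ) (hα : α ∈ Set.Icc (0:ℝ) 1) (hl : 0 < l)
    (hbound : erf (Real.sqrt (l * (1 - α) / 8)) ≤ 1 / Real.sqrt 2) :
    IsCorrelationFunction d
      (fun x => 1 - 2 *
        (erf (Real.sqrt (l * (1 - ((1 - α) * ρ₀ x + α)) / 8))) ^ 2) := by
  have hβ : 0 ≤ l * (1 - α) / 8 := by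
    have := sub_nonneg.2 hα.2
    positivity
  have hβerf : erf √(l * (1 - α) / 8) ^ 2 ≤ 1 / 2 :=
    calc _ ≤ (1 / √2) ^ 2 := pow_le_pow_left₀ (erf_nonneg (sqrt_nonneg _)) hbound 2
      _ = 1 / 2 := by rw [div_pow, one_pow, sq_sqrt zero_le_two]
  simpa only [show ∀ x, l * (1 - ((1 - α) * ρ₀ x + α)) / 8 = l * (1 - α) / 8 * (1 - ρ₀ x) from
    fun x => by ring] using hρ₀.one_sub_two_mul_erf_sq hβ hβerf

/-- If `ρ₀` is a correlation function on `ℝ^d`, `α ∈ [0,1]`, `λ > 0` with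
`erf(√(λ(1-α)/8)) ≤ 1/√2`, and `ρ = (1-α)ρ₀ + α`, then
`x ↦ 1 - 2 (erf(√(λ(1-ρ(x))/8)))²` is again a correlation function. -/
theorem S_transform_of_correlation (d : ℕ) (hd : 1 ≤ d)
    (ρ₀ : EuclideanSpace ℝ (Fin d) → ℝ) (hρ₀ : IsCorrelationFunction d ρ₀)
    (α l : ℝ) (hα : α ∈ Set.Icc (0:ℝ) 1) (hl : 0 < l)
    (hbound : erf (Real.sqrt (l * (1 - α) / 8)) ≤ 1 / Real.sqrt 2) :
    IsCorrelationFunction d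
      (fun x => 1 - 2 *
        (erf (Real.sqrt (l * (1 - ((1 - α) * ρ₀ x + α)) / 8))) ^ 2) :=
  S_transform_of_correlation_general d ρ₀ hρ₀ α l hα hl hbound
end

section
/- Let f, g : [0,∞) → ℝ be continuous functions, convex on [0,∞), taking values in [0,1], with f(0) = g(0) = 1 and with f(t) → 0 and g(t) → 0 as t → ∞. Then the product f·g is continuous, convex on [0,∞), takes values in [0,1], satisfies (f·g)(0) = 1, and (f·g)(t) → 0 as t → ∞. -/
open Set

/-! A convex function on `[0,∞)` that is bounded above is nonincreasing, so two such functions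
vary together, and the product of two nonnegative convex functions that vary together is convex
(Chebyshev's inequality `(f x - f y) (g x - g y) ≥ 0` absorbs the cross terms). -/

lemma ConvexOn.antitoneOn_Ici_of_bddAbove {f : ℝ → ℝ} {a : ℝ} (hf : ConvexOn ℝ (Ici a) f)
    (hbdd : BddAbove (f '' Ici a)) : AntitoneOn f (Ici a) := by
  intro x hx y hy hxy
  by_contra! hlt
  obtain ⟨M, hM⟩ := hbdd
  have hxy' : x < y := hxy.lt_of_ne (by rintro rfl; exact lt_irrefl _ hlt)
  set s := (f y - f x) / (y - x)
  have hs_pos : 0 < s := div_pos (by linarith) (by linarith)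
  have hfyM : f y ≤ M := hM (mem_image_of_mem f hy)
  -- far enough right that a slope of at least `s` from `y` overshoots `M`
  set z := y + (M - f y) / s + 1
  have hyz : y < z := by have : 0 ≤ (M - f y) / s := div_nonneg (by linarith) hs_pos.le; linarith
  have hz : z ∈ Ici a := le_trans hy hyz.le
  have hfzM : f z ≤ M := hM (mem_image_of_mem f hz)
  have hslope : s ≤ (f z - f y) / (z - y) := hf.slope_mono_adjacent hx hz hxy' hyz
  rw [le_div_iff₀ (by linarith)] at hslope
  have hrise : s * (z - y) = M - f y + s := by
    simp only [z]; field_simp; ring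
  linarith

/-- The class `H₁` of continuous convex functions on `[0,∞)` with values in `[0,1]`,
value `1` at `0`, and limit `0` at infinity, is closed under pointwise multiplication. -/
theorem H1_closed_under_mul (f g : ℝ → ℝ)
    (hf_cont : ContinuousOn f (Set.Ici 0)) (hg_cont : ContinuousOn g (Set.Ici 0))
    (hf_conv : ConvexOn ℝ (Set.Ici 0) f) (hg_conv : ConvexOn ℝ (Set.Ici 0) g)
    (hf_mem : ∀ x ∈ Set.Ici (0:ℝ), f x ∈ Set.Icc (0:ℝ) 1)
    (hg_mem : ∀ x ∈ Set.Ici (0:ℝ), g x ∈ Set.Icc (0:ℝ) 1)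
    (hf0 : f 0 = 1) (hg0 : g 0 = 1)
    (hf_lim : Filter.Tendsto f Filter.atTop (nhds 0))
    (hg_lim : Filter.Tendsto g Filter.atTop (nhds 0)) :
    ContinuousOn (fun t => f t * g t) (Set.Ici 0) ∧
    ConvexOn ℝ (Set.Ici 0) (fun t => f t * g t) ∧
    (∀ x ∈ Set.Ici (0:ℝ), f x * g x ∈ Set.Icc (0:ℝ) 1) ∧
    f 0 * g 0 = 1 ∧
    Filter.Tendsto (fun t => f t * g t) Filter.atTop (nhds 0) := by
  have bddAbove_of_mem {h : ℝ → ℝ} (hmem : ∀ x ∈ Ici (0:ℝ), h x ∈ Icc (0:ℝ) 1) :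
      BddAbove (h '' Ici 0) :=
    ⟨1, by rintro _ ⟨x, hx, rfl⟩; exact (hmem x hx).2⟩
  have hf_anti := hf_conv.antitoneOn_Ici_of_bddAbove (bddAbove_of_mem hf_mem)
  have hg_anti := hg_conv.antitoneOn_Ici_of_bddAbove (bddAbove_of_mem hg_mem)
  refine ⟨hf_cont.mul hg_cont, ?_, fun x hx => ?_, by rw [hf0, hg0, one_mul], ?_⟩
  · exact hf_conv.mul hg_conv (fun x hx => (hf_mem x hx).1) (fun x hx => (hg_mem x hx).1)
      (hf_anti.monovaryOn hg_anti)
  · obtain ⟨hf₀, hf₁⟩ := hf_mem x hx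
    obtain ⟨hg₀, hg₁⟩ := hg_mem x hx
    exact ⟨mul_nonneg hf₀ hg₀, mul_le_one₀ hf₁ hg₀ hg₁⟩
  · simpa using hf_lim.mul hg_lim
end

section
/- Let d ≥ 1, let R > 0, and let t ∈ ℝ^d (with the Euclidean norm) satisfy ‖t‖ ≤ 2R. Then the Lebesgue volume of the intersection of the two open balls of radius R centred at 0 and at t equals (2 π^{(d−1)/2} / Γ((d+1)/2)) · R^d · ∫_{‖t‖/(2R)}^{1} (1 − v²)^{(d−1)/2} dv. -/
open Real Set MeasureTheory Metric WithLp

/-!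
Rotate `t` to `‖t‖ e₀`. Slicing the lens `B(0, R) ∩ B(‖t‖ e₀, R)` by the hyperplanes
`x₀ = x` gives `(d-1)`-balls of radius `min √(R² - x²) √(R² - (x - ‖t‖)²)`, so by Fubini
the volume is `κ_{d-1} = unitBallVolume (d - 1)` times the integral of that radius to the
power `d - 1`. The lens is symmetric about `x₀ = ‖t‖ / 2`, so the integral is twice that
over the cap `‖t‖ / 2 ≤ x ≤ R`, and `x = R v` gives the formula, with
`2 π^{(d-1)/2} / Γ((d+1)/2) = 2 κ_{d-1}`.
-/

theorem EuclideanSpace.volume_eq_lintegral_volume_cons {n : ℕ}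
    {s : Set (EuclideanSpace ℝ (Fin (n + 1)))} (hs : MeasurableSet s) :
    volume s =
      ∫⁻ x : ℝ, volume {y : EuclideanSpace ℝ (Fin n) | toLp 2 (Fin.cons x (ofLp y)) ∈ s} := by
  have hs' : MeasurableSet (toLp 2 ⁻¹' s : Set (Fin (n + 1) → ℝ)) :=
    (PiLp.volume_preserving_toLp _).measurable hs
  have e := volume_preserving_piFinSuccAbove (fun _ : Fin (n + 1) => ℝ) 0
  rw [← (PiLp.volume_preserving_toLp _).measure_preimage hs.nullMeasurableSet,
    ← e.symm.measure_preimage hs'.nullMeasurableSet, Measure.volume_eq_prod,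
    Measure.prod_apply (e.symm.measurable hs')]
  congr with x
  rw [← (PiLp.volume_preserving_ofLp _).measure_preimage]
  · congr 1
    ext y
    simp only [mem_preimage, MeasurableEquiv.piFinSuccAbove_symm_apply, Fin.insertNthEquiv,
      Equiv.coe_fn_mk, Fin.insertNth_zero', mem_ofPred_eq]
  · exact (measurable_prodMk_left (e.symm.measurable hs')).nullMeasurableSet

theorem EuclideanSpace.dist_toLp_cons {n : ℕ} (x x' : ℝ) (y y' : EuclideanSpace ℝ (Fin n)) :
    dist (toLp 2 (Fin.cons x (ofLp y)) : EuclideanSpace ℝ (Fin (n + 1)))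
      (toLp 2 (Fin.cons x' (ofLp y'))) = √((x - x') ^ 2 + dist y y' ^ 2) := by
  rw [EuclideanSpace.dist_eq, Fin.sum_univ_succ, EuclideanSpace.dist_sq_eq]
  simp [Real.dist_eq, sq_abs]

theorem EuclideanSpace.toLp_cons_mem_ball_iff {n : ℕ} {R : ℝ} (hR : 0 < R) (x c : ℝ)
    (y : EuclideanSpace ℝ (Fin n)) :
    (toLp 2 (Fin.cons x (ofLp y)) : EuclideanSpace ℝ (Fin (n + 1))) ∈
        ball (toLp 2 (Fin.cons c 0)) R ↔ y ∈ ball 0 √(R ^ 2 - (x - c) ^ 2) := by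
  rw [mem_ball, mem_ball, ← ofLp_zero 2, dist_toLp_cons, sqrt_lt' hR, lt_sqrt dist_nonneg]
  constructor <;> intro h <;> linarith

noncomputable def unitBallVolume (n : ℕ) : ℝ := √π ^ n / Gamma (n / 2 + 1)

theorem unitBallVolume_pos (n : ℕ) : 0 < unitBallVolume n := by
  unfold unitBallVolume
  positivity

theorem EuclideanSpace.volume_ball_of_pos (n : ℕ) (y : EuclideanSpace ℝ (Fin n)) {ρ : ℝ}
    (hρ : 0 < ρ) : volume (ball y ρ) = ENNReal.ofReal (ρ ^ n * unitBallVolume n) := by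
  rcases n.eq_zero_or_pos with rfl | hn
  · have : ball y ρ = univ := eq_univ_of_forall fun z => by simpa [Subsingleton.elim z y] using hρ
    simp [this, volume_euclideanSpace_eq_dirac, unitBallVolume]
  · have : Nonempty (Fin n) := ⟨⟨0, hn⟩⟩
    rw [EuclideanSpace.volume_ball, Fintype.card_fin, ENNReal.ofReal_mul (by positivity),
      ENNReal.ofReal_pow hρ.le, unitBallVolume]

theorem volume_ball_inter_ball_toLp_cons (n : ℕ) {r R : ℝ} (hr : 0 ≤ r) (hR : 0 < R)
    (hrR : r ≤ 2 * R) :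
    volume (ball (0 : EuclideanSpace ℝ (Fin (n + 1))) R ∩ ball (toLp 2 (Fin.cons r 0)) R) =
      ENNReal.ofReal (unitBallVolume n *
        ∫ x in (r - R)..R, min √(R ^ 2 - x ^ 2) √(R ^ 2 - (x - r) ^ 2) ^ n) := by
  set ρ : ℝ → ℝ := fun x => min √(R ^ 2 - x ^ 2) √(R ^ 2 - (x - r) ^ 2)
  have hslice (x : ℝ) : {y : EuclideanSpace ℝ (Fin n) | toLp 2 (Fin.cons x (ofLp y)) ∈
      ball (0 : EuclideanSpace ℝ (Fin (n + 1))) R ∩ ball (toLp 2 (Fin.cons r 0)) R} =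
      ball 0 (ρ x) := by
    have h0 : (0 : EuclideanSpace ℝ (Fin (n + 1))) = toLp 2 (Fin.cons 0 0) := by
      ext i
      cases i using Fin.cases <;> simp
    ext y
    simp only [mem_ofPred_eq, mem_inter_iff, h0, EuclideanSpace.toLp_cons_mem_ball_iff hR,
      sub_zero, mem_ball, lt_min_iff, ρ]
  have hvol : (fun x => volume (ball (0 : EuclideanSpace ℝ (Fin n)) (ρ x))) =
      (Ioo (r - R) R).indicator fun x => ENNReal.ofReal (ρ x ^ n * unitBallVolume n) := by
    funext x
    by_cases hx : x ∈ Ioo (r - R) R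
    · have hpos : 0 < ρ x :=
        lt_min (sqrt_pos.2 (by nlinarith [hx.1, hx.2])) (sqrt_pos.2 (by nlinarith [hx.1, hx.2]))
      rw [indicator_of_mem hx, EuclideanSpace.volume_ball_of_pos n 0 hpos]
    · have hnonpos : ρ x ≤ 0 := by
        rcases not_and_or.1 hx with h | h <;> rw [not_lt] at h
        · exact min_le_of_right_le (sqrt_eq_zero'.2 (by nlinarith)).le
        · exact min_le_of_left_le (sqrt_eq_zero'.2 (by nlinarith)).le
      rw [indicator_of_notMem hx, ball_eq_empty.2 hnonpos, measure_empty]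
  have hρ : Continuous ρ := by fun_prop
  rw [EuclideanSpace.volume_eq_lintegral_volume_cons (measurableSet_ball.inter measurableSet_ball)]
  simp_rw [hslice]
  rw [hvol, lintegral_indicator measurableSet_Ioo, ← ofReal_integral_eq_lintegral_ofReal,
    ← integral_Ioc_eq_integral_Ioo, ← intervalIntegral.integral_of_le (by linarith),
    intervalIntegral.integral_mul_const, mul_comm]
  · exact ((hρ.pow n).mul continuous_const).integrableOn_Icc.mono_set Ioo_subset_Icc_self
  · exact Filter.Eventually.of_forall fun x => mul_nonneg (by positivity) (unitBallVolume_pos n).le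

theorem integral_min_sqrt_sq_sub_sq_pow (n : ℕ) {r R : ℝ} (hr : 0 ≤ r) (hrR : r ≤ 2 * R) :
    ∫ x in (r - R)..R, min √(R ^ 2 - x ^ 2) √(R ^ 2 - (x - r) ^ 2) ^ n =
      2 * ∫ x in (r / 2)..R, √(R ^ 2 - x ^ 2) ^ n := by
  have hint (a b : ℝ) : IntervalIntegrable
      (fun x => min √(R ^ 2 - x ^ 2) √(R ^ 2 - (x - r) ^ 2) ^ n) volume a b :=
    (by fun_prop : Continuous _).intervalIntegrable a b
  have hleft : ∫ x in (r - R)..(r / 2), min √(R ^ 2 - x ^ 2) √(R ^ 2 - (x - r) ^ 2) ^ n =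
      ∫ x in (r - R)..(r / 2), √(R ^ 2 - (r - x) ^ 2) ^ n := by
    refine intervalIntegral.integral_congr fun x hx => ?_
    rw [uIcc_of_le (by linarith)] at hx
    rw [min_eq_right (sqrt_le_sqrt (by nlinarith [hx.2])), ← neg_sub r x, neg_sq]
  have hright : ∫ x in (r / 2)..R, min √(R ^ 2 - x ^ 2) √(R ^ 2 - (x - r) ^ 2) ^ n =
      ∫ x in (r / 2)..R, √(R ^ 2 - x ^ 2) ^ n := by
    refine intervalIntegral.integral_congr fun x hx => ?_
    rw [uIcc_of_le (by linarith)] at hx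
    rw [min_eq_left (sqrt_le_sqrt (by nlinarith [hx.1]))]
  rw [← intervalIntegral.integral_add_adjacent_intervals (hint _ (r / 2)) (hint _ _), hleft,
    hright, intervalIntegral.integral_comp_sub_left (fun x => √(R ^ 2 - x ^ 2) ^ n)]
  ring_nf

theorem integral_sqrt_sq_sub_sq_pow (n : ℕ) {a R : ℝ} (hR : 0 < R) (ha : |a| ≤ R) :
    ∫ x in a..R, √(R ^ 2 - x ^ 2) ^ n =
      R ^ (n + 1) * ∫ v in (a / R)..1, (1 - v ^ 2) ^ ((n : ℝ) / 2) := by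
  obtain ⟨ha₁, ha₂⟩ := abs_le.1 ha
  have hlo : -1 ≤ a / R := by rw [le_div_iff₀ hR]; linarith
  have hhi : a / R ≤ 1 := by rwa [div_le_one hR]
  have hpt : ∀ v ∈ uIcc (a / R) 1,
      √(R ^ 2 - (R * v) ^ 2) ^ n = R ^ n * (1 - v ^ 2) ^ ((n : ℝ) / 2) := by
    intro v hv
    rw [uIcc_of_le hhi] at hv
    have hv : 0 ≤ 1 - v ^ 2 := by nlinarith [hv.1, hv.2]
    rw [show R ^ 2 - (R * v) ^ 2 = R ^ 2 * (1 - v ^ 2) by ring, sqrt_mul' _ hv, sqrt_sq hR.le,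
      mul_pow, rpow_div_two_eq_sqrt _ hv, rpow_natCast]
  have hsub := intervalIntegral.smul_integral_comp_mul_left (a := a / R) (b := 1)
    (fun x => √(R ^ 2 - x ^ 2) ^ n) R
  rw [mul_div_cancel₀ a hR.ne', mul_one] at hsub
  rw [← hsub, smul_eq_mul, intervalIntegral.integral_congr hpt,
    intervalIntegral.integral_const_mul]
  ring

theorem volume_ball_inter_ball_eq_of_norm_eq {E : Type*} [NormedAddCommGroup E]
    [InnerProductSpace ℝ E] [FiniteDimensional ℝ E] [MeasurableSpace E] [BorelSpace E]
    {t u : E} (h : ‖t‖ = ‖u‖) (R₁ R₂ : ℝ) :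
    volume (ball (0 : E) R₁ ∩ ball t R₂) = volume (ball (0 : E) R₁ ∩ ball u R₂) := by
  set f := (ℝ ∙ (t - u))ᗮ.reflection
  have hf : f t = u := Submodule.reflection_sub h
  have hpre : f ⁻¹' (ball 0 R₁ ∩ ball u R₂) = ball 0 R₁ ∩ ball t R₂ := by
    rw [preimage_inter, ← hf, f.preimage_ball, f.preimage_ball, map_zero,
      LinearIsometryEquiv.symm_apply_apply]
  rw [← hpre, f.measurePreserving.measure_preimage
    (measurableSet_ball.inter measurableSet_ball).nullMeasurableSet]

/-- The volume of the intersection of two balls of radius `R` in `ℝ^d` whose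
centres are at distance `‖t‖ ≤ 2R` equals
`(2 π^{(d-1)/2} / Γ((d+1)/2)) · R^d · ∫_{‖t‖/(2R)}^1 (1-v²)^{(d-1)/2} dv`. -/
theorem volume_inter_balls (d : ℕ) (hd : 1 ≤ d) (R : ℝ) (hR : 0 < R)
    (t : EuclideanSpace ℝ (Fin d)) (ht : ‖t‖ ≤ 2 * R) :
    MeasureTheory.volume (Metric.ball (0 : EuclideanSpace ℝ (Fin d)) R ∩ Metric.ball t R)
      = ENNReal.ofReal
        ((2 * Real.pi ^ (((d : ℝ) - 1) / 2) / Real.Gamma (((d : ℝ) + 1) / 2)) * R ^ d *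
          ∫ v in (‖t‖ / (2 * R))..1, (1 - v ^ 2) ^ (((d : ℝ) - 1) / 2)) := by
  obtain ⟨n, rfl⟩ := Nat.exists_eq_add_of_le' hd
  have hu : ‖t‖ = ‖(toLp 2 (Fin.cons ‖t‖ 0) : EuclideanSpace ℝ (Fin (n + 1)))‖ := by
    simp [EuclideanSpace.norm_eq, Fin.sum_univ_succ]
  rw [volume_ball_inter_ball_eq_of_norm_eq hu,
    volume_ball_inter_ball_toLp_cons n (norm_nonneg t) hR ht,
    integral_min_sqrt_sq_sub_sq_pow n (norm_nonneg t) ht,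
    integral_sqrt_sq_sub_sq_pow n hR (by rw [abs_of_nonneg (by positivity)]; linarith), div_div]
  have hexp : ((↑(n + 1) : ℝ) - 1) / 2 = (n : ℝ) / 2 := by push_cast; ring
  have hΓ : ((↑(n + 1) : ℝ) + 1) / 2 = (n : ℝ) / 2 + 1 := by push_cast; ring
  rw [hexp, hΓ, rpow_div_two_eq_sqrt _ pi_pos.le, rpow_natCast, unitBallVolume]
  ring_nf
end

section
/- For every α ∈ (0,1], the function t ↦ t^{(α−1)/2} · exp(−t^α) is completely monotone on (0,∞); that is, it has derivatives of all orders on (0,∞) and (−1)^k times its k-th derivative is nonnegative for all t > 0 and all integers k ≥ 0. -/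
open Real Set

namespace CMaux

open Filter Topology Finset

lemma mem_nhds' {t : ℝ} (ht : 0 < t) : Ioi (0:ℝ) ∈ 𝓝 t := isOpen_Ioi.mem_nhds ht

lemma iter_smooth {f : ℝ → ℝ} (hf : ContDiffOn ℝ (⊤ : ℕ∞) f (Ioi 0)) (n : ℕ) :
    ContDiffOn ℝ (⊤ : ℕ∞) (iteratedDeriv n f) (Ioi 0) := by
  induction n with
  | zero => simpa [iteratedDeriv_zero] using hf
  | succ n ih =>
      rw [iteratedDeriv_succ]
      exact ih.deriv_of_isOpen isOpen_Ioi (by simp)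

lemma iter_diff {f : ℝ → ℝ} (hf : ContDiffOn ℝ (⊤ : ℕ∞) f (Ioi 0)) (n : ℕ) {t : ℝ} (ht : 0 < t) :
    DifferentiableAt ℝ (iteratedDeriv n f) t :=
  ((iter_smooth hf n).differentiableOn (by simp)).differentiableAt (mem_nhds' ht)

lemma iter_hasDerivAt {f : ℝ → ℝ} (hf : ContDiffOn ℝ (⊤ : ℕ∞) f (Ioi 0)) (n : ℕ) {t : ℝ}
    (ht : 0 < t) :
    HasDerivAt (iteratedDeriv n f) (iteratedDeriv (n+1) f t) t := by
  rw [iteratedDeriv_succ]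
  exact (iter_diff hf n ht).hasDerivAt

lemma leibniz {f g : ℝ → ℝ} (hf : ContDiffOn ℝ (⊤ : ℕ∞) f (Ioi 0))
    (hg : ContDiffOn ℝ (⊤ : ℕ∞) g (Ioi 0)) (n : ℕ) :
    ∀ t ∈ Ioi (0:ℝ),
      iteratedDeriv n (fun x => f x * g x) t =
        ∑ i ∈ Finset.range (n+1), (n.choose i : ℝ) *
          (iteratedDeriv i f t * iteratedDeriv (n-i) g t) := by
  induction n with
  | zero => intro t _; simp
  | succ n ih =>
    intro t ht
    have hev : iteratedDeriv n (fun x => f x * g x) =ᶠ[𝓝 t]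
        (fun x => ∑ i ∈ Finset.range (n+1), (n.choose i : ℝ) *
          (iteratedDeriv i f x * iteratedDeriv (n-i) g x)) := by
      filter_upwards [mem_nhds' ht] with x hx using ih x hx
    have hS : HasDerivAt (fun x => ∑ i ∈ Finset.range (n+1), (n.choose i : ℝ) *
          (iteratedDeriv i f x * iteratedDeriv (n-i) g x))
        (∑ i ∈ Finset.range (n+1), (n.choose i : ℝ) *
          (iteratedDeriv (i+1) f t * iteratedDeriv (n-i) g t +
           iteratedDeriv i f t * iteratedDeriv (n-i+1) g t)) t := by
      exact HasDerivAt.fun_sum fun i _ =>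
        ((iter_hasDerivAt hf i ht).mul (iter_hasDerivAt hg (n-i) ht)).const_mul _
    have hstep : iteratedDeriv (n+1) (fun x => f x * g x) t =
        ∑ i ∈ Finset.range (n+1), (n.choose i : ℝ) *
          (iteratedDeriv (i+1) f t * iteratedDeriv (n-i) g t +
           iteratedDeriv i f t * iteratedDeriv (n-i+1) g t) := by
      rw [iteratedDeriv_succ, hev.deriv_eq, hS.deriv]
    rw [hstep]
    -- combinatorics
    set F : ℕ → ℝ := fun i => iteratedDeriv i f t with hF
    set G : ℕ → ℝ := fun i => iteratedDeriv i g t with hG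
    have key : ∑ i ∈ Finset.range (n+1), (n.choose i : ℝ) *
          (F (i+1) * G (n-i) + F i * G (n-i+1)) =
        ∑ i ∈ Finset.range (n+1+1), ((n+1).choose i : ℝ) * (F i * G (n+1-i)) := by
      have hA : ∑ i ∈ Finset.range (n+1), (n.choose i : ℝ) *
            (F (i+1) * G (n-i) + F i * G (n-i+1)) =
          (∑ i ∈ Finset.range (n+1), (n.choose i : ℝ) * (F (i+1) * G (n-i))) +
          ∑ i ∈ Finset.range (n+1), (n.choose i : ℝ) * (F i * G (n-i+1)) := by
        rw [← Finset.sum_add_distrib]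
        exact Finset.sum_congr rfl fun i _ => by ring
      have hB : ∑ i ∈ Finset.range (n+1), (n.choose i : ℝ) * (F i * G (n-i+1)) =
          (∑ i ∈ Finset.range n, (n.choose (i+1) : ℝ) * (F (i+1) * G (n-i))) +
          F 0 * G (n+1) := by
        rw [Finset.sum_range_succ']
        congr 1
        · exact Finset.sum_congr rfl fun i hi => by
            have : n - (i+1) + 1 = n - i := by
              have := Finset.mem_range.mp hi; omega
            rw [this]
        · simp
      have hC : ∑ i ∈ Finset.range (n+1), (n.choose (i+1) : ℝ) * (F (i+1) * G (n-i)) =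
          ∑ i ∈ Finset.range n, (n.choose (i+1) : ℝ) * (F (i+1) * G (n-i)) := by
        rw [Finset.sum_range_succ]
        simp [Nat.choose_succ_self]
      have hR : ∑ i ∈ Finset.range (n+1+1), ((n+1).choose i : ℝ) * (F i * G (n+1-i)) =
          (∑ i ∈ Finset.range (n+1), ((n+1).choose (i+1) : ℝ) * (F (i+1) * G (n-i))) +
          F 0 * G (n+1) := by
        rw [Finset.sum_range_succ']
        congr 1
        · exact Finset.sum_congr rfl fun i _ => by rw [Nat.succ_sub_succ]
        · simp
      rw [hA, hB, ← hC, hR]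
      have : ∑ i ∈ Finset.range (n+1), ((n+1).choose (i+1) : ℝ) * (F (i+1) * G (n-i)) =
          (∑ i ∈ Finset.range (n+1), (n.choose i : ℝ) * (F (i+1) * G (n-i))) +
          ∑ i ∈ Finset.range (n+1), (n.choose (i+1) : ℝ) * (F (i+1) * G (n-i)) := by
        rw [← Finset.sum_add_distrib]
        refine Finset.sum_congr rfl fun i _ => ?_
        rw [Nat.choose_succ_succ']
        push_cast
        ring
      rw [this]
      ring
    rw [key]

lemma cm_mul {f g : ℝ → ℝ} (hf : ContDiffOn ℝ (⊤ : ℕ∞) f (Ioi 0))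
    (hg : ContDiffOn ℝ (⊤ : ℕ∞) g (Ioi 0))
    (hf' : ∀ k : ℕ, ∀ t ∈ Ioi (0:ℝ), 0 ≤ (-1:ℝ)^k * iteratedDeriv k f t)
    (hg' : ∀ k : ℕ, ∀ t ∈ Ioi (0:ℝ), 0 ≤ (-1:ℝ)^k * iteratedDeriv k g t) :
    ∀ k : ℕ, ∀ t ∈ Ioi (0:ℝ), 0 ≤ (-1:ℝ)^k * iteratedDeriv k (fun x => f x * g x) t := by
  intro k t ht
  rw [leibniz hf hg k t ht, Finset.mul_sum]
  refine Finset.sum_nonneg fun i hi => ?_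
  have hik : i ≤ k := by have := Finset.mem_range.mp hi; omega
  have hpow : ((-1:ℝ))^k = (-1:ℝ)^i * (-1:ℝ)^(k-i) := by
    rw [← pow_add]
    congr 1
    omega
  have : (-1:ℝ)^k * ((k.choose i : ℝ) *
        (iteratedDeriv i f t * iteratedDeriv (k-i) g t)) =
      (k.choose i : ℝ) * (((-1:ℝ)^i * iteratedDeriv i f t) *
        ((-1:ℝ)^(k-i) * iteratedDeriv (k-i) g t)) := by
    rw [hpow]; ring
  rw [this]
  exact mul_nonneg (Nat.cast_nonneg _)
    (mul_nonneg (hf' i t ht) (hg' (k-i) t ht))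

lemma iter_rpow (A c : ℝ) (k : ℕ) :
    ∀ t ∈ Ioi (0:ℝ),
      iteratedDeriv k (fun x : ℝ => A * x ^ c) t =
        (A * ∏ i ∈ Finset.range k, (c - i)) * t ^ (c - k) := by
  induction k with
  | zero => intro t _; simp
  | succ k ih =>
    intro t ht
    have hev : iteratedDeriv k (fun x : ℝ => A * x ^ c) =ᶠ[𝓝 t]
        (fun x => (A * ∏ i ∈ Finset.range k, (c - i)) * x ^ (c - k)) := by
      filter_upwards [mem_nhds' ht] with x hx using ih x hx
    have hD : HasDerivAt (fun x : ℝ => (A * ∏ i ∈ Finset.range k, (c - i)) * x ^ (c - k))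
        ((A * ∏ i ∈ Finset.range k, (c - i)) * ((c - k) * t ^ (c - k - 1))) t :=
      (Real.hasDerivAt_rpow_const (Or.inl (ne_of_gt ht))).const_mul _
    rw [iteratedDeriv_succ, hev.deriv_eq, hD.deriv, Finset.prod_range_succ]
    have he : c - (k:ℝ) - 1 = c - ((k:ℕ)+1 : ℕ) := by push_cast; ring
    rw [he]
    push_cast
    ring

lemma smooth_rpow (A c : ℝ) : ContDiffOn ℝ (⊤ : ℕ∞) (fun x : ℝ => A * x ^ c) (Ioi 0) :=
  fun t ht =>
    (contDiffAt_const.mul (Real.contDiffAt_rpow_const_of_ne (ne_of_gt ht))).contDiffWithinAt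

lemma cm_rpow_sign {A c : ℝ} (hA : 0 ≤ A) (hc : c ≤ 0) :
    ∀ k : ℕ, ∀ t ∈ Ioi (0:ℝ),
      0 ≤ (-1:ℝ)^k * iteratedDeriv k (fun x : ℝ => A * x ^ c) t := by
  intro k t ht
  rw [iter_rpow A c k t ht]
  have h2 : ((-1:ℝ))^k * ∏ i ∈ Finset.range k, (c - (i:ℝ)) =
      ∏ i ∈ Finset.range k, ((i:ℝ) - c) := by
    have h3 : ((-1:ℝ))^k = ∏ _i ∈ Finset.range k, (-1:ℝ) := by
      simp
    rw [h3, ← Finset.prod_mul_distrib]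
    exact Finset.prod_congr rfl fun i _ => by ring
  have h1 : (0:ℝ) ≤ ∏ i ∈ Finset.range k, ((i:ℝ) - c) :=
    Finset.prod_nonneg fun i _ => by
      have : (0:ℝ) ≤ (i:ℝ) := Nat.cast_nonneg i
      linarith
  have : (-1:ℝ)^k * ((A * ∏ i ∈ Finset.range k, (c - (i:ℝ))) * t ^ (c - k)) =
      A * (((-1:ℝ))^k * ∏ i ∈ Finset.range k, (c - (i:ℝ))) * t ^ (c - k) := by ring
  rw [this, h2]
  exact mul_nonneg (mul_nonneg hA h1) (Real.rpow_nonneg (le_of_lt ht) _)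

lemma smooth_exp_rpow (α : ℝ) :
    ContDiffOn ℝ (⊤ : ℕ∞) (fun x : ℝ => Real.exp (-(x ^ α))) (Ioi 0) :=
  fun t ht =>
    (((Real.contDiffAt_rpow_const_of_ne (ne_of_gt ht)).neg).exp).contDiffWithinAt

lemma cm_exp_sign {α : ℝ} (hα0 : 0 < α) (hα1 : α ≤ 1) :
    ∀ k : ℕ, ∀ t ∈ Ioi (0:ℝ),
      0 ≤ (-1:ℝ)^k * iteratedDeriv k (fun x : ℝ => Real.exp (-(x ^ α))) t := by
  intro k
  induction k using Nat.strong_induction_on with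
  | _ k IH =>
    match k with
    | 0 =>
      intro t _
      simpa using (Real.exp_nonneg _)
    | (k+1) =>
      intro t ht
      have hEq : Set.EqOn (deriv (fun x : ℝ => Real.exp (-(x ^ α))))
          (fun x => ((-α) * x ^ (α-1)) * Real.exp (-(x ^ α))) (Ioi 0) := by
        intro x hx
        have h1 : HasDerivAt (fun x : ℝ => -(x ^ α)) (-(α * x ^ (α-1))) x :=
          (Real.hasDerivAt_rpow_const (Or.inl (ne_of_gt hx))).neg
        have h2 := h1.exp
        rw [h2.deriv]
        ring
      have hev : iteratedDeriv k (deriv (fun x : ℝ => Real.exp (-(x ^ α)))) t =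
          iteratedDeriv k
            (fun x => ((-α) * x ^ (α-1)) * Real.exp (-(x ^ α))) t := by
        refine Filter.EventuallyEq.iteratedDeriv_eq k ?_
        filter_upwards [mem_nhds' ht] with x hx using hEq hx
      have hL := leibniz (f := fun x : ℝ => (-α) * x ^ (α-1))
        (g := fun x : ℝ => Real.exp (-(x ^ α)))
        (smooth_rpow (-α) (α-1)) (smooth_exp_rpow α) k t ht
      rw [iteratedDeriv_succ', hev, hL, Finset.mul_sum]
      refine Finset.sum_nonneg fun i hi => ?_
      have hik : i ≤ k := by have := Finset.mem_range.mp hi; omega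
      have hFG : iteratedDeriv i (fun x : ℝ => (-α) * x ^ (α-1)) t =
          -(iteratedDeriv i (fun x : ℝ => α * x ^ (α-1)) t) := by
        rw [iter_rpow (-α) (α-1) i t ht, iter_rpow α (α-1) i t ht]
        ring
      have hpow : ((-1:ℝ))^(k+1) * (-1) = (-1:ℝ)^i * (-1:ℝ)^(k-i) := by
        rw [← pow_add, show i + (k - i) = k by omega, pow_succ]
        ring
      have hterm : (-1:ℝ)^(k+1) * ((k.choose i : ℝ) *
            (iteratedDeriv i (fun x : ℝ => (-α) * x ^ (α-1)) t *
             iteratedDeriv (k-i) (fun x : ℝ => Real.exp (-(x ^ α))) t)) =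
          (k.choose i : ℝ) *
            (((-1:ℝ)^i * iteratedDeriv i (fun x : ℝ => α * x ^ (α-1)) t) *
             ((-1:ℝ)^(k-i) *
              iteratedDeriv (k-i) (fun x : ℝ => Real.exp (-(x ^ α))) t)) := by
        rw [hFG]
        linear_combination ((k.choose i : ℝ) *
          iteratedDeriv i (fun x : ℝ => α * x ^ (α-1)) t *
          iteratedDeriv (k-i) (fun x : ℝ => Real.exp (-(x ^ α))) t) * hpow
      rw [hterm]
      refine mul_nonneg (Nat.cast_nonneg _) (mul_nonneg ?_ ?_)
      · exact cm_rpow_sign (le_of_lt hα0) (by linarith) i t ht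
      · exact IH (k-i) (by omega) t ht

end CMaux

/-- For `α ∈ (0,1]`, the function `t ↦ t^{(α-1)/2} · exp(-t^α)` is completely
monotone on `(0,∞)`. -/
theorem rpow_mul_exp_neg_rpow_completely_monotone (α : ℝ) (hα : α ∈ Set.Ioc (0:ℝ) 1) :
    ContDiffOn ℝ (⊤ : ℕ∞) (fun t : ℝ => t ^ ((α - 1) / 2) * Real.exp (-(t ^ α))) (Set.Ioi 0) ∧
    ∀ (k : ℕ) (t : ℝ), 0 < t →
      0 ≤ (-1 : ℝ) ^ k *
        iteratedDerivWithin k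
          (fun t : ℝ => t ^ ((α - 1) / 2) * Real.exp (-(t ^ α))) (Set.Ioi 0) t := by
  obtain ⟨hα0, hα1⟩ := hα
  have hc : (α - 1) / 2 ≤ 0 := by linarith
  have hsm1 : ContDiffOn ℝ (⊤ : ℕ∞) (fun x : ℝ => x ^ ((α - 1) / 2)) (Set.Ioi 0) := by
    have := CMaux.smooth_rpow 1 ((α - 1) / 2)
    simpa only [one_mul] using this
  have hsg1 : ∀ k : ℕ, ∀ t ∈ Set.Ioi (0:ℝ),
      0 ≤ (-1:ℝ)^k * iteratedDeriv k (fun x : ℝ => x ^ ((α - 1) / 2)) t := by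
    have := CMaux.cm_rpow_sign (A := 1) (c := (α - 1) / 2) zero_le_one hc
    simpa only [one_mul] using this
  have hmul := CMaux.cm_mul hsm1 (CMaux.smooth_exp_rpow α) hsg1
    (CMaux.cm_exp_sign hα0 hα1)
  constructor
  · intro t ht
    exact ((Real.contDiffAt_rpow_const_of_ne (ne_of_gt ht)).mul
      (((Real.contDiffAt_rpow_const_of_ne (ne_of_gt ht)).neg).exp)).contDiffWithinAt
  · intro k t ht
    have hW : iteratedDerivWithin k
        (fun t : ℝ => t ^ ((α - 1) / 2) * Real.exp (-(t ^ α))) (Set.Ioi 0) t =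
        iteratedDeriv k
        (fun t : ℝ => t ^ ((α - 1) / 2) * Real.exp (-(t ^ α))) t := by
      rw [iteratedDerivWithin_eq_iteratedFDerivWithin, iteratedDeriv_eq_iteratedFDeriv,
        iteratedFDerivWithin_of_isOpen k isOpen_Ioi ht]
    rw [hW]
    exact hmul k t ht
end

section
/- Let d ≥ 2 be an integer and define g : (0,∞) → ℝ by g(t) = 1 for t ≤ 1 and g(t) = 1 − (1 − 1/t)^{(d−1)/2} for t > 1. Then g is not convex on (0,∞). -/
open Real Set

/-! `g` equals `1` on `(0, 1]` and is strictly below `1` on `(1, ∞)`, where `(1 - 1/t)^p > 0`.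
A convex function that does not decrease from `1/2` to `1` cannot decrease from `1` to `3/2`. -/

theorem turning_bands_tent_deriv_not_convex_general (d : ℕ) :
    ¬ ConvexOn ℝ (Set.Ioi 0)
      (fun t : ℝ => if t ≤ 1 then 1 else 1 - (1 - 1 / t) ^ (((d : ℝ) - 1) / 2)) := by
  set g : ℝ → ℝ := fun t => if t ≤ 1 then 1 else 1 - (1 - 1 / t) ^ (((d : ℝ) - 1) / 2)
  intro hg
  have hflat : g (1 / 2) ≤ g 1 := by norm_num [g]
  have hdrop : g (3 / 2) < g 1 := by
    have hpos : (0 : ℝ) < (1 - 1 / (3 / 2)) ^ (((d : ℝ) - 1) / 2) := rpow_pos_of_pos (by norm_num) _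
    simp only [g, if_pos le_rfl, if_neg (by norm_num : ¬ (3 / 2 : ℝ) ≤ 1)]
    linarith
  have hrise : g 1 ≤ g (3 / 2) :=
    hg.le_right_of_left_le'' (by norm_num : (1 / 2 : ℝ) ∈ Ioi 0) (by norm_num : (3 / 2 : ℝ) ∈ Ioi 0)
      (by norm_num) (by norm_num) hflat
  exact hdrop.not_ge hrise

/-- For an integer `d ≥ 2`, the function `g` with `g(t) = 1` for `t ≤ 1` and
`g(t) = 1 - (1 - 1/t)^{(d-1)/2}` for `t > 1` is not convex on `(0,∞)`. -/
theorem turning_bands_tent_deriv_not_convex (d : ℕ) (hd : 2 ≤ d) :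
    ¬ ConvexOn ℝ (Set.Ioi 0)
      (fun t : ℝ => if t ≤ 1 then 1 else 1 - (1 - 1 / t) ^ (((d : ℝ) - 1) / 2)) :=
  turning_bands_tent_deriv_not_convex_general d
end

section
/- Let d ≥ 6 be an integer. Then ∫_0^1 w^{3/2} (1−w)^{(d−6)/2} (1 − w·(d+1)/4) dw = −(3√π · Γ(d/2 − 2)) / (16 · Γ((d+1)/2)), and in particular this integral is strictly negative. -/
/-!
With `B(u, v) = Γ(u) Γ(v) / Γ(u + v)`, the integral is `B(5/2, d/2 - 2) - (d+1)/4 · B(7/2, d/2 - 2)`.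
The recurrence `B(u + 1, v) = u / (u + v) · B(u, v)` makes the second term `5/4 · B(5/2, d/2 - 2)`,
so the integral is `-B(5/2, d/2 - 2) / 4 < 0`, and `Γ(5/2) = 3√π/4` gives the closed form.
-/

open Real Set ProbabilityTheory

lemma integral_rpow_mul_one_sub_rpow_eq_beta {u v : ℝ} (hu : 0 < u) (hv : 0 < v) :
    ∫ x in (0:ℝ)..1, x ^ (u - 1) * (1 - x) ^ (v - 1) = beta u v := by
  have hcast : Complex.betaIntegral u v
      = ↑(∫ x in (0:ℝ)..1, x ^ (u - 1) * (1 - x) ^ (v - 1)) := by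
    rw [Complex.betaIntegral, ← intervalIntegral.integral_ofReal]
    refine intervalIntegral.integral_congr fun x hx => ?_
    rw [uIcc_of_le zero_le_one] at hx
    push_cast
    rw [Complex.ofReal_cpow hx.1, Complex.ofReal_cpow (sub_nonneg.2 hx.2)]
    push_cast
    ring
  rw [beta_eq_betaIntegralReal u v hu hv, hcast, Complex.ofReal_re]

lemma beta_add_one_left {u v : ℝ} (hu : u ≠ 0) (huv : u + v ≠ 0) :
    beta (u + 1) v = u / (u + v) * beta u v := by
  rw [beta, beta, add_right_comm, Gamma_add_one hu, Gamma_add_one huv, mul_assoc, mul_div_mul_comm]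

lemma integral_rpow_mul_one_sub_rpow_mul_one_sub_mul {u v : ℝ} (hu : 0 < u) (hv : 0 < v)
    (c : ℝ) :
    ∫ x in (0:ℝ)..1, x ^ (u - 1) * (1 - x) ^ (v - 1) * (1 - c * x)
      = (1 - c * u / (u + v)) * beta u v := by
  have hsplit : ∀ x ∈ uIcc (0:ℝ) 1, x ^ (u - 1) * (1 - x) ^ (v - 1) * (1 - c * x)
      = x ^ (u - 1) * (1 - x) ^ (v - 1) - c * (x ^ (u + 1 - 1) * (1 - x) ^ (v - 1)) := by
    intro x hx
    rw [uIcc_of_le zero_le_one] at hx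
    have hpow : x ^ (u + 1 - 1) = x ^ (u - 1) * x := by
      rw [← rpow_add_one' hx.1 (by linarith)]
      ring_nf
    rw [hpow]
    ring
  -- A non-integrable function has interval integral `0`, whereas this one integrates to `beta s v > 0`.
  have hint : ∀ {s : ℝ}, 0 < s →
      IntervalIntegrable (fun x : ℝ => x ^ (s - 1) * (1 - x) ^ (v - 1)) MeasureTheory.volume 0 1 :=
    fun hs => intervalIntegral.intervalIntegrable_of_integral_ne_zero <| by
      rw [integral_rpow_mul_one_sub_rpow_eq_beta hs hv]
      exact (beta_pos hs hv).ne'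
  have hu1 : 0 < u + 1 := by linarith
  rw [intervalIntegral.integral_congr hsplit,
    intervalIntegral.integral_sub (hint hu) ((hint hu1).const_mul c),
    intervalIntegral.integral_const_mul, integral_rpow_mul_one_sub_rpow_eq_beta hu hv,
    integral_rpow_mul_one_sub_rpow_eq_beta hu1 hv, beta_add_one_left hu.ne' (by linarith)]
  ring

lemma Gamma_five_halves : Gamma (5 / 2) = 3 / 4 * √π := by
  rw [show (5 / 2 : ℝ) = 1 / 2 + 1 + 1 by norm_num, Gamma_add_one (by norm_num),
    Gamma_add_one (by norm_num), Gamma_one_half_eq]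
  ring

lemma integral_eq_neg_quarter_beta {d : ℝ} (hd : 4 < d) :
    ∫ w in (0:ℝ)..1, w ^ (3/2 : ℝ) * (1 - w) ^ ((d - 6) / 2) * (1 - w * (d + 1) / 4)
      = -(1 / 4) * beta (5 / 2) (d / 2 - 2) := by
  have h := integral_rpow_mul_one_sub_rpow_mul_one_sub_mul (u := 5 / 2) (v := d / 2 - 2)
    (by norm_num) (by linarith) ((d + 1) / 4)
  convert h using 1
  · congr 1
    ext w
    ring_nf
  · have hd1 : d + 1 ≠ 0 := by linarith
    rw [show (5 / 2 : ℝ) + (d / 2 - 2) = (d + 1) / 2 by ring]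
    field_simp
    ring

/-- For an integer `d ≥ 6`,
`∫₀¹ w^{3/2} (1-w)^{(d-6)/2} (1 - w(d+1)/4) dw = -(3√π Γ(d/2-2))/(16 Γ((d+1)/2))`,
and in particular this integral is strictly negative. -/
theorem beta_integral_second_derivative_neg (d : ℕ) (hd : 6 ≤ d) :
    (∫ w in (0:ℝ)..1,
        w ^ (3/2 : ℝ) * (1 - w) ^ (((d : ℝ) - 6) / 2) * (1 - w * ((d : ℝ) + 1) / 4))
      = -(3 * Real.sqrt Real.pi * Real.Gamma ((d : ℝ) / 2 - 2)) /
          (16 * Real.Gamma (((d : ℝ) + 1) / 2)) ∧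
    (∫ w in (0:ℝ)..1,
        w ^ (3/2 : ℝ) * (1 - w) ^ (((d : ℝ) - 6) / 2) * (1 - w * ((d : ℝ) + 1) / 4))
      < 0 := by
  have hd4 : (4 : ℝ) < d := by exact_mod_cast (by omega : 4 < d)
  rw [integral_eq_neg_quarter_beta hd4]
  refine ⟨?_, ?_⟩
  · rw [beta, Gamma_five_halves, show (5 / 2 : ℝ) + (d / 2 - 2) = (d + 1) / 2 by ring]
    ring
  · have := beta_pos (by norm_num : (0:ℝ) < 5 / 2) (by linarith : (0:ℝ) < d / 2 - 2)
    linarith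
end
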